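/- arXiv:1304.1837 — 6 statements merged into one kernel-verified Lean document; each statement's English description precedes it below -/
import Mathlib

section
/- Let X_S, X_B, X_T be full-rank d-column matrices with V_S = X_S^T X_S, V_B = X_B^T X_B, V_T = X_T^T X_T. For λ ≥ 0, the minimizers (β̂, γ̂) of ‖Y_S − X_S β‖² + ‖Y_B − X_B(β+γ)‖² + λ‖X_T γ‖² satisfy β̂ = W_λ β̂_S + (I − W_λ) β̂_B, where β̂_S = V_S⁻¹X_S^T Y_S, β̂_B = V_B⁻¹X_B^T Y_B, and W_λ = (V_S + λ V_T V_B⁻¹ V_S + λ V_T)⁻¹ (V_S + λ V_T V_B⁻¹ V_S). -/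
/-!
Along any line `t ↦ (β̂ + t v, γ̂ + t w)` the criterion is a quadratic polynomial in `t` that is
minimal at `t = 0`, so its linear coefficient vanishes. This gives the normal equations
`V_S β̂ = X_Sᵀ Y_S + λ V_T γ̂` and `V_B (β̂ + γ̂) + λ V_T γ̂ = X_Bᵀ Y_B`. The second one says
`β̂_B = β̂ + γ̂ + λ V_B⁻¹ V_T γ̂`; substituting `λ V_T γ̂ = V_S (β̂ − β̂_S)` from the first yields
`M β̂ = A β̂_S + λ V_T β̂_B` with `A = V_S + λ V_T V_B⁻¹ V_S` and `M = A + λ V_T`, i.e.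
`β̂ = M⁻¹A β̂_S + (1 − M⁻¹A) β̂_B`.

`M` is invertible: pairing `M x = 0` with `y = V_B⁻¹ V_S x + x` gives
`(V_S x)ᵀ V_B⁻¹ (V_S x) + xᵀ V_S x = −λ yᵀ V_T y ≤ 0`, forcing `x = 0`.
-/

open Matrix

theorem Matrix.mulVec_injective_of_rank_eq_card {K m n : Type*} [Field K] [Fintype n]
    {A : Matrix m n K} (h : A.rank = Fintype.card n) : Function.Injective A.mulVec := by
  rw [mulVec_injective_iff, linearIndependent_iff_card_eq_finrank_span, Set.finrank,
    ← rank_eq_finrank_span_cols, h]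

theorem Matrix.posDef_transpose_mul_self_of_rank_eq_card {m n : Type*} [Fintype m] [Fintype n]
    {X : Matrix m n ℝ} (h : X.rank = Fintype.card n) : (Xᵀ * X).PosDef := by
  simpa only [conjTranspose_eq_transpose_of_trivial] using
    PosDef.conjTranspose_mul_self X (mulVec_injective_of_rank_eq_card h)

theorem isUnit_det_add_smul_mul_inv_mul_add_smul {n : Type*} [Fintype n] [DecidableEq n]
    {S B T : Matrix n n ℝ} (hS : S.PosDef) (hB : B.PosSemidef) (hT : T.PosSemidef) {c : ℝ}
    (hc : 0 ≤ c) : IsUnit (S + c • (T * B⁻¹ * S) + c • T).det := by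
  rw [isUnit_iff_ne_zero, Ne, ← exists_mulVec_eq_zero_iff]
  rintro ⟨x, hx0, hx⟩
  set y := B⁻¹ *ᵥ (S *ᵥ x) + x
  have hSx : S *ᵥ x = -(c • T *ᵥ y) := by
    simp only [add_mulVec, smul_mulVec, ← mulVec_mulVec] at hx
    simp only [y, mulVec_add]
    linear_combination (norm := module) hx
  have hpos : 0 < y ⬝ᵥ S *ᵥ x := by
    have h₁ : 0 ≤ (S *ᵥ x) ⬝ᵥ B⁻¹ *ᵥ (S *ᵥ x) := by
      simpa using hB.inv.dotProduct_mulVec_nonneg (S *ᵥ x)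
    have h₂ : 0 < x ⬝ᵥ S *ᵥ x := by simpa using hS.dotProduct_mulVec_pos hx0
    rw [add_dotProduct, dotProduct_comm]
    exact add_pos_of_nonneg_of_pos h₁ h₂
  have hnonpos : y ⬝ᵥ S *ᵥ x ≤ 0 := by
    rw [hSx, dotProduct_neg, dotProduct_smul, smul_eq_mul, neg_nonpos]
    exact mul_nonneg hc (by simpa using hT.dotProduct_mulVec_nonneg y)
  exact hpos.not_ge hnonpos

section Algebra

variable {n K : Type*} [Fintype n] [DecidableEq n] [Field K]

theorem eq_mulVec_add_one_sub_mulVec {M A : Matrix n n K} (hM : IsUnit M.det) {b x y : n → K}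
    (h : M *ᵥ b = A *ᵥ x + (M - A) *ᵥ y) : b = (M⁻¹ * A) *ᵥ x + (1 - M⁻¹ * A) *ᵥ y := by
  calc b = M⁻¹ *ᵥ (M *ᵥ b) := by rw [mulVec_mulVec, nonsing_inv_mul _ hM, one_mulVec]
    _ = (M⁻¹ * A) *ᵥ x + (1 - M⁻¹ * A) *ᵥ y := by
      rw [h, mulVec_add, mulVec_mulVec, mulVec_mulVec, Matrix.mul_sub, nonsing_inv_mul _ hM]

theorem mulVec_eq_of_normal_equations {S B T : Matrix n n K} (hS : IsUnit S.det)
    (hB : IsUnit B.det) {c : K} {b g u w : n → K}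
    (h₁ : S *ᵥ b = u + c • T *ᵥ g) (h₂ : B *ᵥ (b + g) + c • T *ᵥ g = w) :
    (S + c • (T * B⁻¹ * S) + c • T) *ᵥ b
      = (S + c • (T * B⁻¹ * S)) *ᵥ (S⁻¹ *ᵥ u) + (c • T) *ᵥ (B⁻¹ *ᵥ w) := by
  have hu : S *ᵥ (S⁻¹ *ᵥ u) = u := by rw [mulVec_mulVec, mul_nonsing_inv _ hS, one_mulVec]
  have hw : B⁻¹ *ᵥ w = b + g + c • B⁻¹ *ᵥ (T *ᵥ g) := by
    rw [← h₂, mulVec_add, mulVec_mulVec, nonsing_inv_mul _ hB, one_mulVec, mulVec_smul]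
  simp only [add_mulVec, smul_mulVec, ← mulVec_mulVec, hu, hw, h₁, mulVec_add, mulVec_smul]
  module

end Algebra

lemma eq_zero_of_forall_le_add_mul_add_sq_mul {c a q : ℝ}
    (h : ∀ t : ℝ, c ≤ c + t * a + t ^ 2 * q) : a = 0 := by
  have hmin : IsLocalMin (fun t : ℝ => t * a + t ^ 2 * q) 0 :=
    Filter.Eventually.of_forall fun t => by simpa [add_assoc] using h t
  have hderiv : HasDerivAt (fun t : ℝ => t * a + t ^ 2 * q) a 0 := by
    simpa using
      ((hasDerivAt_id' (0 : ℝ)).mul_const a).fun_add ((hasDerivAt_pow 2 (0 : ℝ)).mul_const q)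
  exact hmin.hasDerivAt_eq_zero hderiv

lemma sum_sq_add_smul {ι : Type*} [Fintype ι] (a c : ι → ℝ) (t : ℝ) :
    ∑ i, (a + t • c) i ^ 2 = ∑ i, a i ^ 2 + t * (2 * (a ⬝ᵥ c)) + t ^ 2 * ∑ i, c i ^ 2 := by
  simp only [dotProduct, Pi.add_apply, Pi.smul_apply, smul_eq_mul, Finset.mul_sum,
    ← Finset.sum_add_distrib]
  exact Finset.sum_congr rfl fun i _ => by ring

section Criterion

variable {ιS ιB ιT κ : Type*} [Fintype ιS] [Fintype ιB] [Fintype ιT] [Fintype κ]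
  (XS : Matrix ιS κ ℝ) (XB : Matrix ιB κ ℝ) (XT : Matrix ιT κ ℝ) (YS : ιS → ℝ) (YB : ιB → ℝ)
  (lam : ℝ)

def biasPenalizedLoss (b g : κ → ℝ) : ℝ :=
  ∑ i, (YS i - (XS *ᵥ b) i) ^ 2 + ∑ i, (YB i - (XB *ᵥ (b + g)) i) ^ 2
    + lam * ∑ i, (XT *ᵥ g) i ^ 2

lemma biasPenalizedLoss_add_smul (b g v w : κ → ℝ) (t : ℝ) :
    biasPenalizedLoss XS XB XT YS YB lam (b + t • v) (g + t • w) =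
      biasPenalizedLoss XS XB XT YS YB lam b g
        + t * (-2 * ((XSᵀ *ᵥ (YS - XS *ᵥ b) + XBᵀ *ᵥ (YB - XB *ᵥ (b + g))) ⬝ᵥ v
            + (XBᵀ *ᵥ (YB - XB *ᵥ (b + g)) - lam • XTᵀ *ᵥ (XT *ᵥ g)) ⬝ᵥ w))
        + t ^ 2 * (∑ i, (XS *ᵥ v) i ^ 2 + ∑ i, (XB *ᵥ (v + w)) i ^ 2
            + lam * ∑ i, (XT *ᵥ w) i ^ 2) := by
  have hS : YS - XS *ᵥ (b + t • v) = (YS - XS *ᵥ b) + t • -(XS *ᵥ v) := by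
    simp only [mulVec_add, mulVec_smul]; module
  have hB : YB - XB *ᵥ (b + t • v + (g + t • w))
      = (YB - XB *ᵥ (b + g)) + t • -(XB *ᵥ (v + w)) := by
    simp only [mulVec_add, mulVec_smul]; module
  have hT : XT *ᵥ (g + t • w) = XT *ᵥ g + t • XT *ᵥ w := by
    rw [mulVec_add, mulVec_smul]
  rw [biasPenalizedLoss, biasPenalizedLoss]
  simp only [← Pi.sub_apply]
  rw [hS, hB, hT, sum_sq_add_smul, sum_sq_add_smul, sum_sq_add_smul]
  simp only [Pi.neg_apply, neg_sq, dotProduct_neg, dotProduct_mulVec, ← mulVec_transpose,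
    dotProduct_add, add_dotProduct, sub_dotProduct, smul_dotProduct, smul_eq_mul]
  ring

variable {XS XB XT YS YB lam} in
theorem normal_equations_of_forall_le {bhat ghat : κ → ℝ}
    (hmin : ∀ b g, biasPenalizedLoss XS XB XT YS YB lam bhat ghat ≤
      biasPenalizedLoss XS XB XT YS YB lam b g) :
    XSᵀ *ᵥ (YS - XS *ᵥ bhat) + XBᵀ *ᵥ (YB - XB *ᵥ (bhat + ghat)) = 0 ∧
      XBᵀ *ᵥ (YB - XB *ᵥ (bhat + ghat)) - lam • XTᵀ *ᵥ (XT *ᵥ ghat) = 0 := by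
  set p := XSᵀ *ᵥ (YS - XS *ᵥ bhat) + XBᵀ *ᵥ (YB - XB *ᵥ (bhat + ghat))
  set q := XBᵀ *ᵥ (YB - XB *ᵥ (bhat + ghat)) - lam • XTᵀ *ᵥ (XT *ᵥ ghat)
  have hstat : ∀ v w, p ⬝ᵥ v + q ⬝ᵥ w = 0 := fun v w => by
    have := eq_zero_of_forall_le_add_mul_add_sq_mul (a := -2 * (p ⬝ᵥ v + q ⬝ᵥ w)) fun t => by
      rw [← biasPenalizedLoss_add_smul]
      exact hmin _ _
    linarith
  exact ⟨dotProduct_self_eq_zero.mp (by simpa using hstat p 0),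
    dotProduct_self_eq_zero.mp (by simpa using hstat 0 q)⟩

end Criterion

theorem stmt0_general {n N r d : ℕ}
    (XS : Matrix (Fin n) (Fin d) ℝ) (XB : Matrix (Fin N) (Fin d) ℝ)
    (XT : Matrix (Fin r) (Fin d) ℝ)
    (hXS : XS.rank = d) (hXB : XB.rank = d)
    (YS : Fin n → ℝ) (YB : Fin N → ℝ) (lam : ℝ) (hlam : 0 ≤ lam)
    (bhat ghat : Fin d → ℝ)
    (hmin : ∀ b g : Fin d → ℝ,
      (∑ i, (YS i - XS.mulVec bhat i)^2)
        + (∑ i, (YB i - XB.mulVec (bhat + ghat) i)^2)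
        + lam * (∑ i, (XT.mulVec ghat i)^2)
      ≤ (∑ i, (YS i - XS.mulVec b i)^2)
        + (∑ i, (YB i - XB.mulVec (b + g) i)^2)
        + lam * (∑ i, (XT.mulVec g i)^2)) :
    bhat =
      (((XSᵀ * XS) + lam • ((XTᵀ * XT) * (XBᵀ * XB)⁻¹ * (XSᵀ * XS))
          + lam • (XTᵀ * XT))⁻¹
        * ((XSᵀ * XS) + lam • ((XTᵀ * XT) * (XBᵀ * XB)⁻¹ * (XSᵀ * XS)))).mulVec
        ((XSᵀ * XS)⁻¹.mulVec (XSᵀ.mulVec YS))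
      + ((1 : Matrix (Fin d) (Fin d) ℝ)
          - ((XSᵀ * XS) + lam • ((XTᵀ * XT) * (XBᵀ * XB)⁻¹ * (XSᵀ * XS))
              + lam • (XTᵀ * XT))⁻¹
            * ((XSᵀ * XS) + lam • ((XTᵀ * XT) * (XBᵀ * XB)⁻¹ * (XSᵀ * XS)))).mulVec
        ((XBᵀ * XB)⁻¹.mulVec (XBᵀ.mulVec YB)) := by
  have hVS := posDef_transpose_mul_self_of_rank_eq_card (X := XS) (by rw [hXS, Fintype.card_fin])
  have hVB := posDef_transpose_mul_self_of_rank_eq_card (X := XB) (by rw [hXB, Fintype.card_fin])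
  have hVT : (XTᵀ * XT).PosSemidef := by
    simpa only [conjTranspose_eq_transpose_of_trivial] using posSemidef_conjTranspose_mul_self XT
  obtain ⟨h₁, h₂⟩ := normal_equations_of_forall_le hmin
  simp only [mulVec_sub] at h₁ h₂
  refine eq_mulVec_add_one_sub_mulVec
    (isUnit_det_add_smul_mul_inv_mul_add_smul hVS hVB.posSemidef hVT hlam) ?_
  rw [add_sub_cancel_left]
  refine mulVec_eq_of_normal_equations (g := ghat) ((isUnit_iff_isUnit_det _).mp hVS.isUnit)
    ((isUnit_iff_isUnit_det _).mp hVB.isUnit) ?_ ?_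
  · rw [← mulVec_mulVec, ← mulVec_mulVec]
    linear_combination (norm := module) h₂ - h₁
  · rw [← mulVec_mulVec, ← mulVec_mulVec]
    linear_combination (norm := module) -h₂

/-- For full-rank design matrices `X_S, X_B, X_T` and `λ ≥ 0`, the minimizers
`(β̂, γ̂)` of `‖Y_S − X_S β‖² + ‖Y_B − X_B(β+γ)‖² + λ‖X_T γ‖²` satisfy
`β̂ = W_λ β̂_S + (I − W_λ) β̂_B` where `β̂_S = V_S⁻¹ X_Sᵀ Y_S`,
`β̂_B = V_B⁻¹ X_Bᵀ Y_B` and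
`W_λ = (V_S + λ V_T V_B⁻¹ V_S + λ V_T)⁻¹ (V_S + λ V_T V_B⁻¹ V_S)`. -/
theorem stmt0 {n N r d : ℕ}
    (XS : Matrix (Fin n) (Fin d) ℝ) (XB : Matrix (Fin N) (Fin d) ℝ)
    (XT : Matrix (Fin r) (Fin d) ℝ)
    (hXS : XS.rank = d) (hXB : XB.rank = d) (hXT : XT.rank = d)
    (YS : Fin n → ℝ) (YB : Fin N → ℝ) (lam : ℝ) (hlam : 0 ≤ lam)
    (bhat ghat : Fin d → ℝ)
    (hmin : ∀ b g : Fin d → ℝ,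
      (∑ i, (YS i - XS.mulVec bhat i)^2)
        + (∑ i, (YB i - XB.mulVec (bhat + ghat) i)^2)
        + lam * (∑ i, (XT.mulVec ghat i)^2)
      ≤ (∑ i, (YS i - XS.mulVec b i)^2)
        + (∑ i, (YB i - XB.mulVec (b + g) i)^2)
        + lam * (∑ i, (XT.mulVec g i)^2)) :
    bhat =
      (((XSᵀ * XS) + lam • ((XTᵀ * XT) * (XBᵀ * XB)⁻¹ * (XSᵀ * XS))
          + lam • (XTᵀ * XT))⁻¹
        * ((XSᵀ * XS) + lam • ((XTᵀ * XT) * (XBᵀ * XB)⁻¹ * (XSᵀ * XS)))).mulVec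
        ((XSᵀ * XS)⁻¹.mulVec (XSᵀ.mulVec YS))
      + ((1 : Matrix (Fin d) (Fin d) ℝ)
          - ((XSᵀ * XS) + lam • ((XTᵀ * XT) * (XBᵀ * XB)⁻¹ * (XSᵀ * XS))
              + lam • (XTᵀ * XT))⁻¹
            * ((XSᵀ * XS) + lam • ((XTᵀ * XT) * (XBᵀ * XB)⁻¹ * (XSᵀ * XS)))).mulVec
        ((XBᵀ * XB)⁻¹.mulVec (XBᵀ.mulVec YB)) :=
  stmt0_general XS XB XT hXS hXB YS YB lam hlam bhat ghat hmin
end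

section
/- If V_T = V_S, both positive definite, and M = V_S^{1/2} V_B⁻¹ V_S^{1/2} has eigenvalues ν₁,…,ν_d, then tr(W_λ) = Σ_{j=1}^d (1 + λν_j)/(1 + λ + λν_j), where W_λ = (V_B + λV_S + λV_B)⁻¹(V_B + λV_S). -/
open Matrix BigOperators

/-! With `P = R U` one has `Pᵀ V_B⁻¹ P = diag ν`, hence `V_B = P diag(ν⁻¹) Pᵀ`, and `V_S = P Pᵀ`:
`P` congruently diagonalizes `V_B` and `V_S` simultaneously, and `ν > 0` because `diag ν` is
congruent to `V_B⁻¹ ≻ 0`. Since `tr((P X Q)⁻¹ (P Y Q)) = tr(X⁻¹ Y)`, the trace of `W_λ` is that of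
a quotient of diagonal matrices, `Σ (ν⁻¹ + λ) / (ν⁻¹ + λ + λ ν⁻¹)`. -/

theorem mul_mul_add_smul_mul_mul {R A : Type*} [NonUnitalNonAssocSemiring A] [SMul R A]
    [IsScalarTower R A A] [SMulCommClass R A A] (c : R) (a b x y : A) :
    a * x * b + c • (a * y * b) = a * (x + c • y) * b := by
  rw [mul_add, add_mul, mul_smul_comm, smul_mul_assoc]

namespace Matrix

variable {n α K : Type*} [Fintype n] [DecidableEq n]

theorem trace_inv_mul_conj [CommRing α] {P Q : Matrix n n α} (hP : IsUnit P.det)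
    (hQ : IsUnit Q.det) (X Y : Matrix n n α) :
    ((P * X * Q)⁻¹ * (P * Y * Q)).trace = (X⁻¹ * Y).trace := by
  calc ((P * X * Q)⁻¹ * (P * Y * Q)).trace = (Q⁻¹ * (X⁻¹ * Y * Q)).trace := by
        simp only [mul_inv_rev, mul_assoc, nonsing_inv_mul_cancel_left _ _ hP]
    _ = (X⁻¹ * Y).trace := by rw [trace_mul_comm, mul_nonsing_inv_cancel_right _ _ hQ]

theorem eq_mul_inv_mul_of_mul_inv_mul_eq [CommRing α] {P Q B D : Matrix n n α}
    (hP : IsUnit P.det) (hQ : IsUnit Q.det) (hB : IsUnit B.det) (h : Q * B⁻¹ * P = D) :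
    B = P * D⁻¹ * Q := by
  rw [← h, mul_inv_rev, mul_inv_rev, nonsing_inv_nonsing_inv _ hB, ← mul_assoc, ← mul_assoc,
    mul_nonsing_inv _ hP, one_mul, nonsing_inv_mul_cancel_right _ _ hQ]

theorem inv_diagonal_of_ne_zero [Field K] {e : n → K} (he : ∀ i, e i ≠ 0) :
    (diagonal e)⁻¹ = diagonal e⁻¹ := by
  refine inv_eq_left_inv ?_
  rw [diagonal_mul_diagonal, ← diagonal_one]
  exact congrArg diagonal (funext fun i => inv_mul_cancel₀ (he i))

theorem trace_inv_diagonal_mul_diagonal [Field K] {e : n → K} (he : ∀ i, e i ≠ 0) (f : n → K) :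
    ((diagonal e)⁻¹ * diagonal f).trace = ∑ i, f i / e i := by
  rw [inv_diagonal_of_ne_zero he, diagonal_mul_diagonal, trace_diagonal]
  exact Finset.sum_congr rfl fun i _ => (div_eq_inv_mul _ _).symm

theorem mul_mul_transpose_of_orthogonal [CommRing α] {R U : Matrix n n α} (hR : Rᵀ = R)
    (hU : Uᵀ * U = 1) : R * U * (R * U)ᵀ = R * R := by
  rw [transpose_mul, hR, mul_assoc, ← mul_assoc U, mul_eq_one_comm.mp hU, one_mul]

theorem transpose_mul_mul_of_orthogonal [CommRing α] {R U B D : Matrix n n α} (hR : Rᵀ = R)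
    (hU : Uᵀ * U = 1) (h : R * B * R = U * D * Uᵀ) : (R * U)ᵀ * B * (R * U) = D := by
  calc (R * U)ᵀ * B * (R * U) = Uᵀ * (R * B * R) * U := by
        simp only [transpose_mul, hR, mul_assoc]
    _ = D := by
        rw [h]; simp only [← mul_assoc, hU, one_mul]; rw [mul_assoc, hU, mul_one]

end Matrix

theorem stmt2_general {d : ℕ} (VS VB : Matrix (Fin d) (Fin d) ℝ)
    (hVB : VB.PosDef)
    (R : Matrix (Fin d) (Fin d) ℝ) (hRpd : R.PosDef) (hRsq : R * R = VS)
    (lam : ℝ) (hlam : 0 ≤ lam)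
    (ν : Fin d → ℝ) (U : Matrix (Fin d) (Fin d) ℝ) (hU : Uᵀ * U = 1)
    (hM : R * VB⁻¹ * R = U * Matrix.diagonal ν * Uᵀ) :
    ((VB + lam • VS + lam • VB)⁻¹ * (VB + lam • VS)).trace
      = ∑ j, (1 + lam * ν j) / (1 + lam + lam * ν j) := by
  have hRT : Rᵀ = R := hRpd.isHermitian
  have hP : IsUnit (R * U).det := by
    rw [det_mul]
    exact hRpd.det_pos.ne'.isUnit.mul (isUnit_det_of_left_inverse hU)
  have hPT : IsUnit (R * U)ᵀ.det := by rwa [det_transpose]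
  have hdiag := transpose_mul_mul_of_orthogonal hRT hU hM
  have hν : ∀ j, 0 < ν j := by
    rw [← posDef_diagonal_iff, ← hdiag]
    exact (IsUnit.posDef_star_left_conjugate_iff ((isUnit_iff_isUnit_det _).2 hP)).2 hVB.inv
  have hVB' : VB = R * U * diagonal ν⁻¹ * (R * U)ᵀ := by
    rw [← inv_diagonal_of_ne_zero fun j => (hν j).ne']
    exact eq_mul_inv_mul_of_mul_inv_mul_eq hP hPT hVB.det_pos.ne'.isUnit hdiag
  have hVS' : VS = R * U * 1 * (R * U)ᵀ := by
    rw [mul_one, mul_mul_transpose_of_orthogonal hRT hU, hRsq]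
  rw [hVS', hVB', mul_mul_add_smul_mul_mul, mul_mul_add_smul_mul_mul, trace_inv_mul_conj hP hPT,
    ← diagonal_one, ← diagonal_smul, ← diagonal_smul, diagonal_add, diagonal_add,
    trace_inv_diagonal_mul_diagonal]
  · refine Finset.sum_congr rfl fun j _ => ?_
    have := (hν j).ne'
    simp only [Pi.inv_apply, Pi.smul_apply, smul_eq_mul, mul_one]
    field_simp
    ring
  · intro j
    have := hν j
    simp only [Pi.inv_apply, Pi.smul_apply, smul_eq_mul, mul_one]
    positivity

/-- If `V_T = V_S`, both positive definite, and `M = V_S^{1/2} V_B⁻¹ V_S^{1/2}`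
has eigenvalues `ν_j` (via an orthogonal diagonalization `M = U diag(ν) Uᵀ`),
then `tr(W_λ) = Σ_j (1 + λ ν_j)/(1 + λ + λ ν_j)`, where
`W_λ = (V_B + λ V_S + λ V_B)⁻¹ (V_B + λ V_S)`. -/
theorem stmt2 {d : ℕ} (VS VB : Matrix (Fin d) (Fin d) ℝ)
    (hVS : VS.PosDef) (hVB : VB.PosDef)
    (R : Matrix (Fin d) (Fin d) ℝ) (hRpd : R.PosDef) (hRsq : R * R = VS)
    (lam : ℝ) (hlam : 0 ≤ lam)
    (ν : Fin d → ℝ) (U : Matrix (Fin d) (Fin d) ℝ) (hU : Uᵀ * U = 1)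
    (hM : R * VB⁻¹ * R = U * Matrix.diagonal ν * Uᵀ) :
    ((VB + lam • VS + lam • VB)⁻¹ * (VB + lam • VS)).trace
      = ∑ j, (1 + lam * ν j) / (1 + lam + lam * ν j) :=
  stmt2_general VS VB hVB R hRpd hRsq lam hlam ν U hU hM
end

section
/- With V_T = V_S positive definite, β̂ = W_λ β̂_S + (I−W_λ) β̂_B where β̂_S, β̂_B are independent with E β̂_S = β, Cov β̂_S = σ_S² V_S⁻¹, E β̂_B = β+γ, Cov β̂_B = σ_B² V_B⁻¹. Then E‖X_S(β̂−β)‖² = σ_S² Σ_j (1+λν_j)²/(1+λ+λν_j)² + Σ_j λ²κ_j²/(1+λ+λν_j)², where κ_j² = u_j^T V_S^{1/2} Θ V_S^{1/2} u_j, Θ = γγ^T + σ_B² V_B⁻¹, and M = V_S^{1/2}V_B⁻¹V_S^{1/2} = U diag(ν_j) U^T is a spectral decomposition with orthonormal columns u_j. -/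
/-!
Since `W + (1 - W) = 1`, the error is `W (β̂_S - β) + (1 - W) (β̂_B - β)`. Independence kills the
cross moment, so the risk is `tr (V_S (W Σ_S Wᵀ + (1 - W) Θ (1 - W)ᵀ))`, where
`Θ = γγᵀ + σ_B² V_B⁻¹` is the second moment of `β̂_B - β`. With `V_S = R²`, the matrix
`V_B⁻¹ V_S = R⁻¹ M R` is similar to `diag ν` through `S = R⁻¹ U`, so `W` and `1 - W` are
`S diag ((1 + λν) / (1 + λ + λν)) S⁻¹` and `S diag (λ / (1 + λ + λν)) S⁻¹`, and conjugating the
traces by `R` and `U` leaves sums over the eigenvalues.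
-/

open Matrix MeasureTheory BigOperators

section CrossMoment

variable {Ω ι κ : Type*} [MeasurableSpace Ω] (P : Measure Ω)

noncomputable def crossMoment (x : Ω → ι → ℝ) (y : Ω → κ → ℝ) : Matrix ι κ ℝ :=
  Matrix.of fun i j => ∫ ω, x ω i * y ω j ∂P

variable {P} {x : Ω → ι → ℝ} {y : Ω → κ → ℝ}

lemma crossMoment_comm : crossMoment P y x = (crossMoment P x y)ᵀ := by
  ext i j
  simp only [crossMoment, of_apply, transpose_apply, mul_comm]

lemma crossMoment_sumElim {ι' κ' : Type*} {x' : Ω → ι' → ℝ} {y' : Ω → κ' → ℝ} :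
    crossMoment P (fun ω => Sum.elim (x ω) (x' ω)) (fun ω => Sum.elim (y ω) (y' ω))
      = fromBlocks (crossMoment P x y) (crossMoment P x y') (crossMoment P x' y)
          (crossMoment P x' y') := by
  ext (i | i) (j | j) <;> rfl

variable [Fintype ι] [Fintype κ]

lemma integral_sum_sum_const_mul {f : ι → κ → Ω → ℝ} (c : ι → κ → ℝ)
    (hf : ∀ i j, Integrable (f i j) P) :
    ∫ ω, ∑ i, ∑ j, c i j * f i j ω ∂P = ∑ i, ∑ j, c i j * ∫ ω, f i j ω ∂P := by
  rw [integral_finsetSum _ fun i _ => integrable_finsetSum _ fun j _ => (hf i j).const_mul _]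
  refine Finset.sum_congr rfl fun i _ => ?_
  rw [integral_finsetSum _ fun j _ => (hf i j).const_mul _]
  exact Finset.sum_congr rfl fun j _ => integral_const_mul _ _

lemma integral_dotProduct_mulVec (Q : Matrix ι κ ℝ)
    (hxy : ∀ i j, Integrable (fun ω => x ω i * y ω j) P) :
    ∫ ω, x ω ⬝ᵥ Q *ᵥ y ω ∂P = trace (Q * crossMoment P y x) := by
  have hpt : ∀ ω, x ω ⬝ᵥ Q *ᵥ y ω = ∑ i, ∑ j, Q i j * (x ω i * y ω j) := fun ω => by
    simp only [dotProduct, mulVec, Finset.mul_sum]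
    exact Finset.sum_congr rfl fun i _ => Finset.sum_congr rfl fun j _ => by ring
  rw [crossMoment_comm]
  simp only [hpt, integral_sum_sum_const_mul (fun i j => Q i j) hxy]
  rfl

variable {ι' κ' : Type*}

lemma mulVec_mul_mulVec (A : Matrix ι' ι ℝ) (B : Matrix κ' κ ℝ) (u : ι → ℝ) (v : κ → ℝ)
    (i : ι') (j : κ') :
    (A *ᵥ u) i * (B *ᵥ v) j = ∑ k, ∑ l, (A i k * B j l) * (u k * v l) := by
  simp only [mulVec, dotProduct, Finset.sum_mul_sum]
  exact Finset.sum_congr rfl fun k _ => Finset.sum_congr rfl fun l _ => by ring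

lemma integrable_mulVec_mul_mulVec (A : Matrix ι' ι ℝ) (B : Matrix κ' κ ℝ)
    (hxy : ∀ i j, Integrable (fun ω => x ω i * y ω j) P) (i : ι') (j : κ') :
    Integrable (fun ω => (A *ᵥ x ω) i * (B *ᵥ y ω) j) P := by
  simp only [mulVec_mul_mulVec]
  exact integrable_finsetSum _ fun k _ => integrable_finsetSum _ fun l _ =>
    (hxy k l).const_mul _

lemma crossMoment_mulVec (A : Matrix ι' ι ℝ) (B : Matrix κ' κ ℝ)
    (hxy : ∀ i j, Integrable (fun ω => x ω i * y ω j) P) :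
    crossMoment P (fun ω => A *ᵥ x ω) (fun ω => B *ᵥ y ω) = A * crossMoment P x y * Bᵀ := by
  ext i j
  simp only [crossMoment, of_apply, mulVec_mul_mulVec,
    integral_sum_sum_const_mul (fun k l => A i k * B j l) hxy, mul_apply, transpose_apply,
    Finset.sum_mul]
  rw [Finset.sum_comm]
  exact Finset.sum_congr rfl fun k _ => Finset.sum_congr rfl fun l _ => by ring

lemma integral_quadForm_mulVec_add_mulVec {u w : Ω → κ → ℝ} (Q : Matrix ι ι ℝ)
    (A B : Matrix ι κ ℝ) (huu : ∀ i j, Integrable (fun ω => u ω i * u ω j) P)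
    (huw : ∀ i j, Integrable (fun ω => u ω i * w ω j) P)
    (hww : ∀ i j, Integrable (fun ω => w ω i * w ω j) P) (huw₀ : crossMoment P u w = 0) :
    ∫ ω, (A *ᵥ u ω + B *ᵥ w ω) ⬝ᵥ Q *ᵥ (A *ᵥ u ω + B *ᵥ w ω) ∂P
      = trace (Q * (A * crossMoment P u u * Aᵀ + B * crossMoment P w w * Bᵀ)) := by
  set z : Ω → κ ⊕ κ → ℝ := fun ω => Sum.elim (u ω) (w ω)
  have hzz : ∀ i j, Integrable (fun ω => z ω i * z ω j) P := by
    rintro (i | i) (j | j)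
    exacts [huu i j, huw i j, (huw j i).congr (ae_of_all _ fun ω => mul_comm _ _), hww i j]
  have hwu₀ : crossMoment P w u = 0 := by rw [crossMoment_comm, huw₀, transpose_zero]
  simp only [← fromCols_mulVec_sumElim]
  rw [integral_dotProduct_mulVec Q (integrable_mulVec_mul_mulVec _ _ hzz),
    crossMoment_mulVec _ _ hzz, crossMoment_sumElim, huw₀, hwu₀, transpose_fromCols,
    fromCols_mul_fromBlocks, fromCols_mul_fromRows]
  simp only [Matrix.mul_zero, add_zero, zero_add, Matrix.mul_assoc]

end CrossMoment

section Centering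

lemma sub_const_mul_sub_const {Ω : Type*} (f g : Ω → ℝ) (a b : ℝ) :
    (fun ω => (f ω - a) * (g ω - b))
      = fun ω => f ω * g ω - b * f ω - a * g ω + a * b := by
  funext ω; ring

variable {Ω : Type*} [MeasurableSpace Ω] {P : Measure Ω} {f g : Ω → ℝ}

lemma integrable_sub_const_mul_sub_const [IsFiniteMeasure P] (hf : Integrable f P)
    (hg : Integrable g P) (hfg : Integrable (fun ω => f ω * g ω) P) (a b : ℝ) :
    Integrable (fun ω => (f ω - a) * (g ω - b)) P := by
  rw [sub_const_mul_sub_const]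
  exact ((hfg.sub (hf.const_mul b)).sub (hg.const_mul a)).add (integrable_const _)

lemma integral_sub_const_mul_sub_const [IsProbabilityMeasure P] (hf : Integrable f P)
    (hg : Integrable g P) (hfg : Integrable (fun ω => f ω * g ω) P) (a b : ℝ) :
    ∫ ω, (f ω - a) * (g ω - b) ∂P
      = ∫ ω, f ω * g ω ∂P - b * ∫ ω, f ω ∂P - a * ∫ ω, g ω ∂P + a * b := by
  have h₁ : Integrable (fun ω => f ω * g ω - b * f ω) P := hfg.sub (hf.const_mul b)
  have h₂ : Integrable (fun ω => f ω * g ω - b * f ω - a * g ω) P := h₁.sub (hg.const_mul a)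
  rw [sub_const_mul_sub_const, integral_add h₂ (integrable_const _),
    integral_sub h₁ (hg.const_mul a), integral_sub hfg (hf.const_mul b), integral_const_mul,
    integral_const_mul, integral_const]
  simp only [probReal_univ, smul_eq_mul, one_mul]

variable {ι κ : Type*} {x : Ω → ι → ℝ} {y : Ω → κ → ℝ}

lemma crossMoment_sub_const [IsProbabilityMeasure P] {μx : ι → ℝ} {μy : κ → ℝ}
    (hx : ∀ i, Integrable (fun ω => x ω i) P) (hy : ∀ j, Integrable (fun ω => y ω j) P)
    (hxy : ∀ i j, Integrable (fun ω => x ω i * y ω j) P)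
    (hμx : ∀ i, ∫ ω, x ω i ∂P = μx i) (hμy : ∀ j, ∫ ω, y ω j ∂P = μy j) (a : ι → ℝ) (b : κ → ℝ) :
    crossMoment P (fun ω => x ω - a) (fun ω => y ω - b)
      = crossMoment P (fun ω => x ω - μx) (fun ω => y ω - μy) + vecMulVec (μx - a) (μy - b) := by
  ext i j
  simp only [crossMoment, Matrix.add_apply, of_apply, vecMulVec_apply, Pi.sub_apply,
    integral_sub_const_mul_sub_const (hx i) (hy j) (hxy i j), hμx, hμy]
  ring

variable [Fintype ι] [DecidableEq ι]

lemma integral_quadForm_weighted_estimator_sub [IsProbabilityMeasure P] {bS bB : Ω → ι → ℝ}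
    {β γ : ι → ℝ} {CS CB : Matrix ι ι ℝ}
    (hIntS : ∀ i, Integrable (fun ω => bS ω i) P)
    (hIntB : ∀ i, Integrable (fun ω => bB ω i) P)
    (hIntSS : ∀ i j, Integrable (fun ω => bS ω i * bS ω j) P)
    (hIntBB : ∀ i j, Integrable (fun ω => bB ω i * bB ω j) P)
    (hIntSB : ∀ i j, Integrable (fun ω => bS ω i * bB ω j) P)
    (hmeanS : ∀ i, ∫ ω, bS ω i ∂P = β i)
    (hmeanB : ∀ i, ∫ ω, bB ω i ∂P = β i + γ i)
    (hcovS : ∀ i j, ∫ ω, (bS ω i - β i) * (bS ω j - β j) ∂P = CS i j)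
    (hcovB : ∀ i j, ∫ ω, (bB ω i - β i - γ i) * (bB ω j - β j - γ j) ∂P = CB i j)
    (hcross : ∀ i j, ∫ ω, (bS ω i - β i) * (bB ω j - β j - γ j) ∂P = 0)
    (A Q : Matrix ι ι ℝ) :
    ∫ ω, (A *ᵥ bS ω + (1 - A) *ᵥ bB ω - β) ⬝ᵥ Q *ᵥ (A *ᵥ bS ω + (1 - A) *ᵥ bB ω - β) ∂P
      = trace (Q * (A * CS * Aᵀ + (1 - A) * (vecMulVec γ γ + CB) * (1 - A)ᵀ)) := by
  have huu : crossMoment P (fun ω => bS ω - β) (fun ω => bS ω - β) = CS := by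
    ext i j
    exact hcovS i j
  have huw : crossMoment P (fun ω => bS ω - β) (fun ω => bB ω - β) = 0 := by
    rw [crossMoment_sub_const hIntS hIntB hIntSB hmeanS (μy := β + γ) hmeanB, sub_self,
      zero_vecMulVec, add_zero]
    ext i j
    simpa [crossMoment, ← sub_sub] using hcross i j
  have hww : crossMoment P (fun ω => bB ω - β) (fun ω => bB ω - β) = vecMulVec γ γ + CB := by
    rw [crossMoment_sub_const hIntB hIntB hIntBB (μx := β + γ) hmeanB (μy := β + γ) hmeanB,
      add_sub_cancel_left, add_comm]
    congr 1
    ext i j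
    simpa [crossMoment, ← sub_sub] using hcovB i j
  have herr : ∀ ω, A *ᵥ bS ω + (1 - A) *ᵥ bB ω - β = A *ᵥ (bS ω - β) + (1 - A) *ᵥ (bB ω - β) :=
    fun ω => by
      simp only [mulVec_sub, sub_mulVec, one_mulVec]
      abel
  simp_rw [herr]
  rw [integral_quadForm_mulVec_add_mulVec (u := fun ω => bS ω - β) (w := fun ω => bB ω - β) Q A
    (1 - A) (fun i j => integrable_sub_const_mul_sub_const (hIntS i) (hIntS j) (hIntSS i j) _ _)
    (fun i j => integrable_sub_const_mul_sub_const (hIntS i) (hIntB j) (hIntSB i j) _ _)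
    (fun i j => integrable_sub_const_mul_sub_const (hIntB i) (hIntB j) (hIntBB i j) _ _) huw,
    huu, hww]

end Centering

section Spectral

variable {n : Type*} [Fintype n] [DecidableEq n] {S S' : Matrix n n ℝ}

lemma smul_one_add_smul_conj_diagonal (h : S * S' = 1) (ν : n → ℝ) (a b : ℝ) :
    a • 1 + b • (S * diagonal ν * S') = S * diagonal (fun j => a + b * ν j) * S' := by
  have hd : diagonal (fun j => a + b * ν j) = a • 1 + b • diagonal ν := by
    ext i k
    by_cases hik : i = k <;> simp [hik, one_apply]
  rw [hd, Matrix.mul_add, Matrix.add_mul, Matrix.mul_smul, Matrix.smul_mul, Matrix.mul_one, h,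
    Matrix.mul_smul, Matrix.smul_mul]

lemma one_sub_conj_diagonal (h : S * S' = 1) (p : n → ℝ) :
    1 - S * diagonal p * S' = S * diagonal (fun j => 1 - p j) * S' := by
  simpa [sub_eq_add_neg] using smul_one_add_smul_conj_diagonal h p 1 (-1)

lemma conj_diagonal_inv_mul_conj_diagonal (h : S' * S = 1) {p : n → ℝ} (hp : ∀ j, p j ≠ 0)
    (q : n → ℝ) :
    (S * diagonal p * S')⁻¹ * (S * diagonal q * S') = S * diagonal (fun j => q j / p j) * S' := by
  have h' : S * S' = 1 := mul_eq_one_comm.mp h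
  have hcancel : ∀ (d e : n → ℝ), S * diagonal d * S' * (S * diagonal e * S')
      = S * diagonal (d * e) * S' := fun d e => by
    simp only [Matrix.mul_assoc, ← Matrix.mul_assoc S' S, h, Matrix.one_mul]
    rw [← Matrix.mul_assoc (diagonal d), diagonal_mul_diagonal]
    rfl
  rw [inv_eq_right_inv (B := S * diagonal p⁻¹ * S'), hcancel,
    show p⁻¹ * q = fun j => q j / p j from funext fun j => by simp [div_eq_inv_mul]]
  rw [hcancel, show p * p⁻¹ = 1 from funext fun j => mul_inv_cancel₀ (hp j), diagonal_one',
    Matrix.mul_one, h']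

lemma inv_mul_eq_conj_diagonal {V W R U : Matrix n n ℝ} (hR : IsUnit R.det) (hRV : R * R = V)
    {ν : n → ℝ} (hM : R * W⁻¹ * R = U * diagonal ν * Uᵀ) :
    W⁻¹ * V = (R⁻¹ * U) * diagonal ν * (Uᵀ * R) := by
  rw [← hRV, show W⁻¹ * (R * R) = R⁻¹ * (R * W⁻¹ * R) * R by
    simp only [Matrix.mul_assoc, nonsing_inv_mul_cancel_left _ _ hR], hM]
  simp only [Matrix.mul_assoc]

lemma inv_add_smul_mul_add_eq_conj_diagonal {VS VB : Matrix n n ℝ} (hVB : IsUnit VB.det)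
    (h : S' * S = 1) {ν : n → ℝ} (hν : VB⁻¹ * VS = S * diagonal ν * S') {lam : ℝ}
    (he : ∀ j, 1 + lam + lam * ν j ≠ 0) :
    (VB + lam • VS + lam • VB)⁻¹ * (VB + lam • VS)
      = S * diagonal (fun j => (1 + lam * ν j) / (1 + lam + lam * ν j)) * S' := by
  have h' : S * S' = 1 := mul_eq_one_comm.mp h
  have hT : VB + lam • VS + lam • VB = VB * ((1 + lam) • 1 + lam • (VB⁻¹ * VS)) := by
    rw [Matrix.mul_add, Matrix.mul_smul, Matrix.mul_smul, mul_nonsing_inv_cancel_left _ _ hVB,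
      add_smul, one_smul, Matrix.mul_one]
    abel
  have hA : VB + lam • VS = VB * ((1 : ℝ) • 1 + lam • (VB⁻¹ * VS)) := by
    rw [Matrix.mul_add, Matrix.mul_smul, Matrix.mul_smul, mul_nonsing_inv_cancel_left _ _ hVB,
      one_smul, Matrix.mul_one]
  rw [hT, hA, Matrix.mul_inv_rev, Matrix.mul_assoc, nonsing_inv_mul_cancel_left _ _ hVB, hν,
    smul_one_add_smul_conj_diagonal h', smul_one_add_smul_conj_diagonal h',
    conj_diagonal_inv_mul_conj_diagonal h he]

lemma one_sub_inv_add_smul_mul_add_eq_conj_diagonal {VS VB : Matrix n n ℝ} (hVB : IsUnit VB.det)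
    (h : S' * S = 1) {ν : n → ℝ} (hν : VB⁻¹ * VS = S * diagonal ν * S') {lam : ℝ}
    (he : ∀ j, 1 + lam + lam * ν j ≠ 0) :
    1 - (VB + lam • VS + lam • VB)⁻¹ * (VB + lam • VS)
      = S * diagonal (fun j => lam / (1 + lam + lam * ν j)) * S' := by
  rw [inv_add_smul_mul_add_eq_conj_diagonal hVB h hν he,
    one_sub_conj_diagonal (mul_eq_one_comm.mp h)]
  refine congrArg (fun p => S * diagonal p * S') (funext fun j => ?_)
  field_simp [he j]
  ring

lemma trace_diagonal_mul_mul_diagonal (d : n → ℝ) (Z : Matrix n n ℝ) :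
    trace (diagonal d * Z * diagonal d) = ∑ j, d j ^ 2 * Z j j := by
  simp only [trace, diag, mul_diagonal, diagonal_mul]
  exact Finset.sum_congr rfl fun j _ => by ring

lemma trace_mul_conj_diagonal_mul_transpose {V R U : Matrix n n ℝ} (hR : IsUnit R.det)
    (hRt : Rᵀ = R) (hRV : R * R = V) (hU : Uᵀ * U = 1) (d : n → ℝ) (X : Matrix n n ℝ) :
    trace (V * ((R⁻¹ * U) * diagonal d * (Uᵀ * R) * X * ((R⁻¹ * U) * diagonal d * (Uᵀ * R))ᵀ))
      = ∑ j, d j ^ 2 * (Uᵀ * (R * X * R) * U) j j := by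
  subst hRV
  have hconj :
      R * R * ((R⁻¹ * U) * diagonal d * (Uᵀ * R) * X * ((R⁻¹ * U) * diagonal d * (Uᵀ * R))ᵀ)
        = R * (U * (diagonal d * (Uᵀ * (R * X * R) * U) * diagonal d) * Uᵀ) * R⁻¹ := by
    simp only [transpose_mul, transpose_transpose, transpose_nonsing_inv, hRt, diagonal_transpose,
      Matrix.mul_assoc, mul_nonsing_inv_cancel_left _ _ hR]
  rw [hconj, trace_mul_cycle, nonsing_inv_mul _ hR, Matrix.one_mul, trace_mul_cycle,
    hU, Matrix.one_mul, trace_diagonal_mul_mul_diagonal]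

lemma trace_mul_conj_diagonal_mul_inv_transpose {V R U : Matrix n n ℝ} (hR : IsUnit R.det)
    (hRt : Rᵀ = R) (hRV : R * R = V) (hU : Uᵀ * U = 1) (d : n → ℝ) :
    trace (V * ((R⁻¹ * U) * diagonal d * (Uᵀ * R) * V⁻¹ * ((R⁻¹ * U) * diagonal d * (Uᵀ * R))ᵀ))
      = ∑ j, d j ^ 2 := by
  have hRVR : R * V⁻¹ * R = 1 := by
    rw [← hRV, Matrix.mul_inv_rev, Matrix.mul_assoc, Matrix.mul_assoc, nonsing_inv_mul _ hR,
      Matrix.mul_one, mul_nonsing_inv _ hR]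
  rw [trace_mul_conj_diagonal_mul_transpose hR hRt hRV hU, hRVR, Matrix.mul_one, hU]
  simp only [one_apply_eq, mul_one]

lemma nonneg_of_eq_conj_diagonal {M U : Matrix n n ℝ} (hM : M.PosSemidef) (hU : Uᵀ * U = 1)
    {ν : n → ℝ} (h : M = U * diagonal ν * Uᵀ) (j : n) : 0 ≤ ν j := by
  have hD : diagonal ν = Uᴴ * M * U := by
    rw [conjTranspose_eq_transpose_of_trivial, h, Matrix.mul_assoc, Matrix.mul_assoc,
      Matrix.mul_assoc, hU, Matrix.mul_one, ← Matrix.mul_assoc, hU, Matrix.one_mul]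
  have := (hD ▸ hM.conjTranspose_mul_mul_same U).diag_nonneg (i := j)
  rwa [diagonal_apply_eq] at this

end Spectral

theorem stmt5_general {d : ℕ} {Ω : Type*} [MeasurableSpace Ω]
    (P : Measure Ω) [IsProbabilityMeasure P]
    (VS VB : Matrix (Fin d) (Fin d) ℝ) (hVB : VB.PosDef)
    (β γ : Fin d → ℝ) (σS σB : ℝ)
    (bS bB : Ω → Fin d → ℝ)
    (hIntS : ∀ i, Integrable (fun ω => bS ω i) P)
    (hIntB : ∀ i, Integrable (fun ω => bB ω i) P)
    (hIntSS : ∀ i j, Integrable (fun ω => bS ω i * bS ω j) P)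
    (hIntBB : ∀ i j, Integrable (fun ω => bB ω i * bB ω j) P)
    (hIntSB : ∀ i j, Integrable (fun ω => bS ω i * bB ω j) P)
    (hmeanS : ∀ i, ∫ ω, bS ω i ∂P = β i)
    (hmeanB : ∀ i, ∫ ω, bB ω i ∂P = β i + γ i)
    (hcovS : ∀ i j, ∫ ω, (bS ω i - β i) * (bS ω j - β j) ∂P = σS^2 * VS⁻¹ i j)
    (hcovB : ∀ i j, ∫ ω, (bB ω i - β i - γ i) * (bB ω j - β j - γ j) ∂P
        = σB^2 * VB⁻¹ i j)
    (hcross : ∀ i j, ∫ ω, (bS ω i - β i) * (bB ω j - β j - γ j) ∂P = 0)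
    (lam : ℝ) (hlam : 0 ≤ lam)
    (R : Matrix (Fin d) (Fin d) ℝ) (hRpd : R.PosDef) (hRsq : R * R = VS)
    (ν : Fin d → ℝ) (U : Matrix (Fin d) (Fin d) ℝ) (hU : Uᵀ * U = 1)
    (hM : R * VB⁻¹ * R = U * Matrix.diagonal ν * Uᵀ) :
    (∫ ω, (((VB + lam • VS + lam • VB)⁻¹ * (VB + lam • VS)).mulVec (bS ω)
            + ((1 : Matrix (Fin d) (Fin d) ℝ)
                - (VB + lam • VS + lam • VB)⁻¹ * (VB + lam • VS)).mulVec (bB ω)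
            - β)
          ⬝ᵥ VS.mulVec
          (((VB + lam • VS + lam • VB)⁻¹ * (VB + lam • VS)).mulVec (bS ω)
            + ((1 : Matrix (Fin d) (Fin d) ℝ)
                - (VB + lam • VS + lam • VB)⁻¹ * (VB + lam • VS)).mulVec (bB ω)
            - β) ∂P)
      = σS^2 * ∑ j, (1 + lam * ν j)^2 / (1 + lam + lam * ν j)^2
        + ∑ j, lam^2 *
            ((Uᵀ j) ⬝ᵥ (R * (vecMulVec γ γ + σB^2 • VB⁻¹) * R).mulVec (Uᵀ j))
            / (1 + lam + lam * ν j)^2 := by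
  have hR : IsUnit R.det := hRpd.det_pos.ne'.isUnit
  have hVBu : IsUnit VB.det := hVB.det_pos.ne'.isUnit
  have hRt : Rᵀ = R := hRpd.isHermitian
  have hS : (Uᵀ * R) * (R⁻¹ * U) = 1 := by
    rw [Matrix.mul_assoc, mul_nonsing_inv_cancel_left _ _ hR, hU]
  have hν : ∀ j, 0 ≤ ν j := by
    refine nonneg_of_eq_conj_diagonal ?_ hU hM
    simpa [hRt] using hVB.inv.posSemidef.conjTranspose_mul_mul_same R
  have he : ∀ j, 1 + lam + lam * ν j ≠ 0 := fun j =>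
    (add_pos_of_pos_of_nonneg (by linarith) (mul_nonneg hlam (hν j))).ne'
  have hN := inv_mul_eq_conj_diagonal hR hRsq hM
  rw [integral_quadForm_weighted_estimator_sub hIntS hIntB hIntSS hIntBB hIntSB hmeanS hmeanB
      (CS := σS ^ 2 • VS⁻¹) hcovS (CB := σB ^ 2 • VB⁻¹) hcovB hcross,
    Matrix.mul_add, trace_add, Matrix.mul_smul, Matrix.smul_mul, Matrix.mul_smul, trace_smul,
    one_sub_inv_add_smul_mul_add_eq_conj_diagonal hVBu hS hN he,
    inv_add_smul_mul_add_eq_conj_diagonal hVBu hS hN he,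
    trace_mul_conj_diagonal_mul_inv_transpose hR hRt hRsq hU,
    trace_mul_conj_diagonal_mul_transpose hR hRt hRsq hU, smul_eq_mul]
  simp only [mul_mul_apply, div_pow, Finset.mul_sum]
  congr 1
  exact Finset.sum_congr rfl fun j _ => by ring

/-- Predictive mean squared error of the data enriched estimator
`β̂ = W_λ β̂_S + (I − W_λ) β̂_B` (with `V_T = V_S`):
`E‖X_S(β̂−β)‖² = σ_S² Σ_j (1+λν_j)²/(1+λ+λν_j)² + Σ_j λ²κ_j²/(1+λ+λν_j)²`,
where `κ_j² = u_jᵀ V_S^{1/2} Θ V_S^{1/2} u_j`, `Θ = γγᵀ + σ_B² V_B⁻¹`, and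
`M = V_S^{1/2} V_B⁻¹ V_S^{1/2} = U diag(ν) Uᵀ` orthogonally. -/
theorem stmt5 {d : ℕ} {Ω : Type*} [MeasurableSpace Ω]
    (P : Measure Ω) [IsProbabilityMeasure P]
    (VS VB : Matrix (Fin d) (Fin d) ℝ) (hVS : VS.PosDef) (hVB : VB.PosDef)
    (β γ : Fin d → ℝ) (σS σB : ℝ) (hσS : 0 < σS) (hσB : 0 < σB)
    (bS bB : Ω → Fin d → ℝ)
    (hIntS : ∀ i, Integrable (fun ω => bS ω i) P)
    (hIntB : ∀ i, Integrable (fun ω => bB ω i) P)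
    (hIntSS : ∀ i j, Integrable (fun ω => bS ω i * bS ω j) P)
    (hIntBB : ∀ i j, Integrable (fun ω => bB ω i * bB ω j) P)
    (hIntSB : ∀ i j, Integrable (fun ω => bS ω i * bB ω j) P)
    (hmeanS : ∀ i, ∫ ω, bS ω i ∂P = β i)
    (hmeanB : ∀ i, ∫ ω, bB ω i ∂P = β i + γ i)
    (hcovS : ∀ i j, ∫ ω, (bS ω i - β i) * (bS ω j - β j) ∂P = σS^2 * VS⁻¹ i j)
    (hcovB : ∀ i j, ∫ ω, (bB ω i - β i - γ i) * (bB ω j - β j - γ j) ∂P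
        = σB^2 * VB⁻¹ i j)
    (hcross : ∀ i j, ∫ ω, (bS ω i - β i) * (bB ω j - β j - γ j) ∂P = 0)
    (lam : ℝ) (hlam : 0 ≤ lam)
    (R : Matrix (Fin d) (Fin d) ℝ) (hRpd : R.PosDef) (hRsq : R * R = VS)
    (ν : Fin d → ℝ) (U : Matrix (Fin d) (Fin d) ℝ) (hU : Uᵀ * U = 1)
    (hM : R * VB⁻¹ * R = U * Matrix.diagonal ν * Uᵀ) :
    (∫ ω, (((VB + lam • VS + lam • VB)⁻¹ * (VB + lam • VS)).mulVec (bS ω)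
            + ((1 : Matrix (Fin d) (Fin d) ℝ)
                - (VB + lam • VS + lam • VB)⁻¹ * (VB + lam • VS)).mulVec (bB ω)
            - β)
          ⬝ᵥ VS.mulVec
          (((VB + lam • VS + lam • VB)⁻¹ * (VB + lam • VS)).mulVec (bS ω)
            + ((1 : Matrix (Fin d) (Fin d) ℝ)
                - (VB + lam • VS + lam • VB)⁻¹ * (VB + lam • VS)).mulVec (bB ω)
            - β) ∂P)
      = σS^2 * ∑ j, (1 + lam * ν j)^2 / (1 + lam + lam * ν j)^2
        + ∑ j, lam^2 *
            ((Uᵀ j) ⬝ᵥ (R * (vecMulVec γ γ + σB^2 • VB⁻¹) * R).mulVec (Uᵀ j))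
            / (1 + lam + lam * ν j)^2 :=
  stmt5_general P VS VB hVB β γ σS σB bS bB hIntS hIntB hIntSS hIntBB hIntSB hmeanS hmeanB hcovS
    hcovB hcross lam hlam R hRpd hRsq ν U hU hM
end

section
/- For the L₁-penalized location criterion F(μ,δ) = Σ_{i∈S}(Y_i−μ)² + Σ_{i∈B}(Y_i−μ−δ)² + 2λ|δ|: if 0 ≤ λ ≤ nN|Ȳ_B−Ȳ_S|/(n+N), then the minimizers are μ̂ = Ȳ_S + (λ/n) sign(Ȳ_B−Ȳ_S) and δ̂ = Ȳ_B−Ȳ_S − λ(N+n)/(Nn) · sign(Ȳ_B−Ȳ_S); if λ > nN|Ȳ_B−Ȳ_S|/(n+N), then δ̂ = 0 and μ̂ = (nȲ_S + NȲ_B)/(n+N). -/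
/-!
Splitting off the within-group sums of squares reduces `F` to
`n (Ȳ_S - μ)² + N (Ȳ_B - μ - δ)² + 2λ|δ|`, a convex function of `(μ, δ)`. A point is a
minimizer as soon as the `μ`-derivative of the smooth part vanishes and its `δ`-derivative is
`-2λ g` for a subgradient `g` of `|·|` at `δ`; in each regime the claimed point satisfies these
conditions with `g = sign(Ȳ_B - Ȳ_S)`, respectively with `g = nN(Ȳ_B - Ȳ_S) / ((n + N) λ)`.
-/

open Finset

theorem Finset.sum_sub_sq_eq_sum_sub_mean_sq_add {ι : Type*} (s : Finset ι) (f : ι → ℝ) (c : ℝ) :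
    ∑ i ∈ s, (f i - c) ^ 2 =
      ∑ i ∈ s, (f i - (∑ j ∈ s, f j) / #s) ^ 2 + #s * ((∑ j ∈ s, f j) / #s - c) ^ 2 := by
  have expand : ∀ c : ℝ,
      ∑ i ∈ s, (f i - c) ^ 2 = ∑ i ∈ s, f i ^ 2 - 2 * c * ∑ i ∈ s, f i + #s * c ^ 2 := by
    intro c
    rw [sum_congr rfl fun i _ => (by ring : (f i - c) ^ 2 = f i ^ 2 - 2 * c * f i + c ^ 2)]
    simp only [sum_add_distrib, sum_sub_distrib, ← mul_sum, sum_const, nsmul_eq_mul]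
  rcases s.eq_empty_or_nonempty with rfl | hs
  · simp
  have hcard : (#s : ℝ) ≠ 0 := by exact_mod_cast hs.card_pos.ne'
  rw [expand, expand]
  field_simp
  ring

def lassoLocationLoss (p q a b lam μ δ : ℝ) : ℝ :=
  p * (a - μ) ^ 2 + q * (b - μ - δ) ^ 2 + 2 * lam * |δ|

theorem lassoLocationLoss_le_of_subgradient {p q a b lam μ₀ δ₀ g : ℝ}
    (hp : 0 ≤ p) (hq : 0 ≤ q) (hlam : 0 ≤ lam)
    (hμ : p * (a - μ₀) + q * (b - μ₀ - δ₀) = 0) (hδ : q * (b - μ₀ - δ₀) = lam * g)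
    (hg : |g| ≤ 1) (hgδ : g * δ₀ = |δ₀|) (μ δ : ℝ) :
    lassoLocationLoss p q a b lam μ₀ δ₀ ≤ lassoLocationLoss p q a b lam μ δ := by
  have hgδ_le : g * δ ≤ |δ| := by
    calc g * δ ≤ |g| * |δ| := by rw [← abs_mul]; exact le_abs_self _
      _ ≤ |δ| := mul_le_of_le_one_left (abs_nonneg δ) hg
  have key : lassoLocationLoss p q a b lam μ δ - lassoLocationLoss p q a b lam μ₀ δ₀ =
      p * (μ - μ₀) ^ 2 + q * (μ - μ₀ + (δ - δ₀)) ^ 2 + 2 * lam * (|δ| - g * δ) := by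
    unfold lassoLocationLoss
    linear_combination (-2 * (μ - μ₀)) * hμ + (-2 * (δ - δ₀)) * hδ + (2 * lam) * hgδ
  rw [← sub_nonneg, key]
  have := sub_nonneg.2 hgδ_le
  positivity

theorem Real.sign_mul_sub_mul_sign_eq_abs {c d : ℝ} (hcd : c ≤ |d|) :
    Real.sign d * (d - c * Real.sign d) = |d - c * Real.sign d| := by
  rcases lt_trichotomy d 0 with hd | rfl | hd
  · rw [abs_of_neg hd] at hcd
    rw [Real.sign_of_neg hd, abs_of_nonpos (by linarith)]
    ring
  · simp
  · rw [abs_of_pos hd] at hcd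
    rw [Real.sign_of_pos hd, abs_of_nonneg (by linarith)]
    ring

theorem Real.abs_sign_le_one (r : ℝ) : |Real.sign r| ≤ 1 := by
  rcases Real.sign_apply_eq r with h | h | h <;> simp [h]

theorem lassoLocationLoss_soft_threshold_le {p q a b lam : ℝ} (hp : 0 < p) (hq : 0 < q)
    (hlam : 0 ≤ lam) (hsmall : lam ≤ p * q * |b - a| / (p + q)) (μ δ : ℝ) :
    lassoLocationLoss p q a b lam (a + lam / p * Real.sign (b - a))
        (b - a - lam * (q + p) / (q * p) * Real.sign (b - a)) ≤
      lassoLocationLoss p q a b lam μ δ := by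
  have hthreshold : lam * (q + p) / (q * p) ≤ |b - a| := by
    rw [le_div_iff₀ (by positivity)] at hsmall
    rw [div_le_iff₀ (by positivity)]
    linarith
  refine lassoLocationLoss_le_of_subgradient hp.le hq.le hlam ?_ ?_ (Real.abs_sign_le_one (b - a))
    (Real.sign_mul_sub_mul_sign_eq_abs hthreshold) μ δ
  · field_simp
    ring
  · field_simp
    ring

theorem lassoLocationLoss_pooled_mean_le {p q a b lam : ℝ} (hp : 0 < p) (hq : 0 < q)
    (hlarge : p * q * |b - a| / (p + q) < lam) (μ δ : ℝ) :
    lassoLocationLoss p q a b lam ((p * a + q * b) / (p + q)) 0 ≤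
      lassoLocationLoss p q a b lam μ δ := by
  have hlam : 0 < lam := lt_of_le_of_lt (by positivity) hlarge
  have hpq : 0 < p + q := by positivity
  refine lassoLocationLoss_le_of_subgradient (g := p * q * (b - a) / (p + q) / lam)
    hp.le hq.le hlam.le ?_ ?_ ?_ (by simp) μ δ
  · field_simp
    ring
  · field_simp
    ring
  · rw [abs_div, abs_of_pos hlam, div_le_one hlam, abs_div, abs_mul, abs_of_pos (mul_pos hp hq),
      abs_of_pos hpq]
    exact hlarge.le

/-- L₁-penalized location model: soft-threshold form of the minimizers.
If `0 ≤ λ ≤ nN|Ȳ_B−Ȳ_S|/(n+N)` the minimizers are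
`μ̂ = Ȳ_S + (λ/n) sign(Ȳ_B−Ȳ_S)` and
`δ̂ = Ȳ_B−Ȳ_S − λ(N+n)/(Nn) sign(Ȳ_B−Ȳ_S)`; if `λ` exceeds that bound,
`δ̂ = 0` and `μ̂ = (nȲ_S + NȲ_B)/(n+N)`. -/
theorem stmt9 {n N : ℕ} (hn : 0 < n) (hN : 0 < N)
    (YS : Fin n → ℝ) (YB : Fin N → ℝ) (lam : ℝ) (hlam : 0 ≤ lam) :
    let mS := (∑ i, YS i) / (n : ℝ)
    let mB := (∑ i, YB i) / (N : ℝ)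
    let F := fun (μ δ : ℝ) =>
      (∑ i, (YS i - μ)^2) + (∑ i, (YB i - μ - δ)^2) + 2 * lam * |δ|
    (lam ≤ (n : ℝ) * N * |mB - mS| / (n + N) →
      ∀ μ δ, F (mS + (lam / n) * Real.sign (mB - mS))
               (mB - mS - lam * ((N : ℝ) + n) / ((N : ℝ) * n) * Real.sign (mB - mS))
             ≤ F μ δ)
    ∧ ((n : ℝ) * N * |mB - mS| / (n + N) < lam →
      ∀ μ δ, F (((n : ℝ) * mS + N * mB) / (n + N)) 0 ≤ F μ δ) := by
  intro mS mB F
  have hF : ∀ μ δ, F μ δ = (∑ i, (YS i - mS) ^ 2) + (∑ i, (YB i - mB) ^ 2) +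
      lassoLocationLoss n N mS mB lam μ δ := by
    intro μ δ
    simp only [F, sub_sub _ μ δ, sum_sub_sq_eq_sum_sub_mean_sq_add univ _ μ,
      sum_sub_sq_eq_sum_sub_mean_sq_add univ _ (μ + δ), card_univ, Fintype.card_fin,
      lassoLocationLoss]
    ring
  have hn' : (0 : ℝ) < n := Nat.cast_pos.2 hn
  have hN' : (0 : ℝ) < N := Nat.cast_pos.2 hN
  refine ⟨fun hsmall μ δ => ?_, fun hlarge μ δ => ?_⟩ <;> rw [hF, hF]
  · exact add_le_add_right (lassoLocationLoss_soft_threshold_le hn' hN' hlam hsmall μ δ) _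
  · exact add_le_add_right (lassoLocationLoss_pooled_mean_le hn' hN' hlarge μ δ) _
end

section
/- Let η ~ N(0, I_d) in ℝᵈ, b ∈ ℝᵈ fixed, and A, B > 0 constants. Define Z = η + A(b−η)/(‖b−η‖² + B). Then E‖Z‖² < d + E[ A(A + 4 − 2d)/(‖b−η‖² + B) ]. -/
/-!
Stein's lemma `E[(X - μ) g(X)] = v E[g'(X)]` for `X ~ N(μ, v)` is integration by parts against
the Gaussian density, whose derivative is `-(x - μ) / v` times the density; by Fubini it holds
along each coordinate of a product of Gaussians. Applied to `x ↦ x i + 2 G i x` it gives Stein's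
unbiased risk estimate `E‖η + G(η)‖² = E[∑ i, (1 + 2 ∂ᵢGᵢ(η) + Gᵢ(η)²)]`. For
`G(η) = A (b - η) / S` with `S = ‖b - η‖² + B` this integrand equals
`d - 2Ad / S + (A² + 4A) ‖b - η‖² / S²`, which falls short of `d + A (A + 4 - 2d) / S` by
`(A² + 4A) B / S² > 0` at every point.
-/

open MeasureTheory ProbabilityTheory Real
open scoped NNReal

namespace ProbabilityTheory

lemma hasDerivAt_gaussianPDFReal (μ : ℝ) (v : ℝ≥0) (x : ℝ) :
    HasDerivAt (gaussianPDFReal μ v) (-(x - μ) / v * gaussianPDFReal μ v x) x := by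
  have hexp : HasDerivAt (fun y => -(y - μ) ^ 2 / (2 * (v : ℝ))) (-(x - μ) / v) x := by
    have h := ((((hasDerivAt_id x).sub_const μ).pow 2).neg).div_const (2 * (v : ℝ))
    refine (h : HasDerivAt (fun y => -(y - μ) ^ 2 / (2 * (v : ℝ))) _ x).congr_deriv ?_
    by_cases hv : (v : ℝ) = 0
    · simp [hv]
    · simp only [Nat.cast_ofNat, id_eq, Nat.add_one_sub_one, pow_one, mul_one, neg_sub]
      field_simp
      ring
  refine (hexp.exp.const_mul (√(2 * π * v))⁻¹).congr_deriv ?_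
  simp only [gaussianPDFReal]; ring

lemma integrable_gaussianReal_iff {μ : ℝ} {v : ℝ≥0} (hv : v ≠ 0) {f : ℝ → ℝ} :
    Integrable f (gaussianReal μ v) ↔ Integrable (fun x => gaussianPDFReal μ v x * f x) := by
  rw [gaussianReal_of_var_ne_zero _ hv, integrable_withDensity_iff_integrable_smul'
    (measurable_gaussianPDF _ _) (ae_of_all _ fun _ => gaussianPDF_lt_top)]
  simp [toReal_gaussianPDF]

theorem integral_sub_mul_eq_integral_deriv_gaussianReal {μ : ℝ} {v : ℝ≥0} {g g' : ℝ → ℝ}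
    (hg : ∀ x, HasDerivAt g (g' x) x) (hg_int : Integrable g (gaussianReal μ v))
    (hg'_int : Integrable g' (gaussianReal μ v))
    (hxg : Integrable (fun x => (x - μ) * g x) (gaussianReal μ v)) :
    ∫ x, (x - μ) * g x ∂gaussianReal μ v = v * ∫ x, g' x ∂gaussianReal μ v := by
  rcases eq_or_ne v 0 with rfl | hv
  · simp
  set p := gaussianPDFReal μ v
  rw [integrable_gaussianReal_iff hv] at hg_int hg'_int hxg
  have parts := integral_mul_deriv_eq_deriv_mul_of_integrable (u := g) (v := p)
    (fun x _ => hg x) (fun x _ => hasDerivAt_gaussianPDFReal μ v x)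
    ((hxg.const_mul (-(v : ℝ)⁻¹)).congr (ae_of_all _ fun x => by simp only [Pi.mul_apply]; ring))
    (hg'_int.congr (ae_of_all _ fun x => by simp only [Pi.mul_apply]; ring))
    (hg_int.congr (ae_of_all _ fun x => by simp only [Pi.mul_apply]; ring))
  have hv' : (v : ℝ) ≠ 0 := by exact_mod_cast hv
  simp only [integral_gaussianReal_eq_integral_smul hv, smul_eq_mul]
  calc ∫ x, p x * ((x - μ) * g x) = -v * ∫ x, g x * (-(x - μ) / v * p x) := by
        rw [← integral_const_mul]; congr 1 with x; field_simp
    _ = v * ∫ x, p x * g' x := by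
        rw [parts]; simp only [mul_comm (g' _)]; ring

theorem integral_fst_sub_mul_eq_integral_deriv_prod_gaussianReal {μ : ℝ} {v : ℝ≥0}
    {Y : Type*} [MeasurableSpace Y] {κ : Measure Y} [SFinite κ] {F F' : ℝ × Y → ℝ}
    (hF : ∀ t y, HasDerivAt (fun s => F (s, y)) (F' (t, y)) t)
    (hF_int : Integrable F ((gaussianReal μ v).prod κ))
    (hF'_int : Integrable F' ((gaussianReal μ v).prod κ))
    (hxF : Integrable (fun z => (z.1 - μ) * F z) ((gaussianReal μ v).prod κ)) :
    ∫ z, (z.1 - μ) * F z ∂(gaussianReal μ v).prod κ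
      = v * ∫ z, F' z ∂(gaussianReal μ v).prod κ := by
  rw [integral_prod_symm _ hxF, integral_prod_symm _ hF'_int, ← integral_const_mul]
  refine integral_congr_ae ?_
  filter_upwards [hF_int.prod_left_ae, hF'_int.prod_left_ae, hxF.prod_left_ae]
    with y hFy hF'y hxFy
  exact integral_sub_mul_eq_integral_deriv_gaussianReal (fun t => hF t y) hFy hF'y hxFy

theorem integral_sub_mul_eq_integral_partialDeriv_pi_gaussianReal {d : ℕ} {μ : Fin d → ℝ}
    {v : Fin d → ℝ≥0} (i : Fin d) {F F' : (Fin d → ℝ) → ℝ}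
    (hF : ∀ x, HasDerivAt (fun t => F (Function.update x i t)) (F' x) (x i))
    (hF_int : Integrable F (Measure.pi fun j => gaussianReal (μ j) (v j)))
    (hF'_int : Integrable F' (Measure.pi fun j => gaussianReal (μ j) (v j)))
    (hxF : Integrable (fun x => (x i - μ i) * F x)
      (Measure.pi fun j => gaussianReal (μ j) (v j))) :
    ∫ x, (x i - μ i) * F x ∂Measure.pi (fun j => gaussianReal (μ j) (v j))
      = v i * ∫ x, F' x ∂Measure.pi (fun j => gaussianReal (μ j) (v j)) := by
  obtain ⟨n, rfl⟩ : ∃ n, d = n + 1 := ⟨d - 1, (Nat.succ_pred_eq_of_pos i.pos).symm⟩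
  set ρ := (gaussianReal (μ i) (v i)).prod
    (Measure.pi fun j => gaussianReal (μ (i.succAbove j)) (v (i.succAbove j)))
  have hmp := (measurePreserving_piFinSuccAbove (fun j => gaussianReal (μ j) (v j)) i).symm
  have integral_eq (G : (Fin (n + 1) → ℝ) → ℝ) :
      ∫ x, G x ∂Measure.pi (fun j => gaussianReal (μ j) (v j))
        = ∫ z, G (i.insertNth z.1 z.2) ∂ρ :=
    (hmp.integral_comp' G).symm
  have integrable_iff (G : (Fin (n + 1) → ℝ) → ℝ) :
      Integrable G (Measure.pi fun j => gaussianReal (μ j) (v j))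
        ↔ Integrable (fun z => G (i.insertNth z.1 z.2)) ρ :=
    (hmp.integrable_comp_emb (MeasurableEquiv.measurableEmbedding _)).symm
  rw [integral_eq, integral_eq]
  simp only [Fin.insertNth_apply_same]
  refine integral_fst_sub_mul_eq_integral_deriv_prod_gaussianReal (fun t y => ?_)
    ((integrable_iff F).1 hF_int) ((integrable_iff F').1 hF'_int) ?_
  · simpa [Fin.update_insertNth] using hF (i.insertNth t y)
  · simpa using (integrable_iff _).1 hxF

lemma memLp_eval_pi_gaussianReal {ι : Type*} [Fintype ι] (μ : ι → ℝ) (v : ι → ℝ≥0) (i : ι)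
    (p : ℝ≥0) : MemLp (fun x => x i) p (Measure.pi fun j => gaussianReal (μ j) (v j)) :=
  (memLp_id_gaussianReal p).comp_measurePreserving (measurePreserving_eval _ i)

lemma integrable_eval_pi_gaussianReal {ι : Type*} [Fintype ι] (μ : ι → ℝ) (v : ι → ℝ≥0)
    (i : ι) : Integrable (fun x => x i) (Measure.pi fun j => gaussianReal (μ j) (v j)) :=
  (memLp_eval_pi_gaussianReal μ v i 1).integrable le_rfl

/-- Stein's unbiased risk estimate. -/
theorem integral_sum_sq_add_eq_integral_sure {d : ℕ} {G G' : Fin d → (Fin d → ℝ) → ℝ}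
    (hG : ∀ i x, HasDerivAt (fun t => G i (Function.update x i t)) (G' i x) (x i))
    (hG_int : ∀ i, Integrable (G i) (Measure.pi fun _ => gaussianReal 0 1))
    (hG'_int : ∀ i, Integrable (G' i) (Measure.pi fun _ => gaussianReal 0 1))
    (hxG : ∀ i, Integrable (fun x => x i * G i x) (Measure.pi fun _ => gaussianReal 0 1))
    (hG_sq : ∀ i, Integrable (fun x => G i x ^ 2) (Measure.pi fun _ => gaussianReal 0 1)) :
    ∫ x, ∑ i, (x i + G i x) ^ 2 ∂Measure.pi (fun _ => gaussianReal 0 1)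
      = ∫ x, ∑ i, (1 + 2 * G' i x + G i x ^ 2) ∂Measure.pi (fun _ => gaussianReal 0 1) := by
  set γ := Measure.pi fun _ : Fin d => gaussianReal 0 1
  have hx i : Integrable (fun x => x i) γ := integrable_eval_pi_gaussianReal _ _ i
  have hx_sq i : Integrable (fun x => x i ^ 2) γ :=
    (memLp_eval_pi_gaussianReal (fun _ => 0) (fun _ => 1) i 2).integrable_sq
  have hxF i : Integrable (fun x => x i * (x i + 2 * G i x)) γ :=
    ((hx_sq i).fun_add ((hxG i).const_mul 2)).congr (ae_of_all _ fun x => by ring)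
  have hF'_int i : Integrable (fun x => 1 + 2 * G' i x) γ :=
    (integrable_const 1).fun_add ((hG'_int i).const_mul 2)
  have stein i : ∫ x, x i * (x i + 2 * G i x) ∂γ = ∫ x, 1 + 2 * G' i x ∂γ := by
    have hF x : HasDerivAt (fun t => Function.update x i t i + 2 * G i (Function.update x i t))
        (1 + 2 * G' i x) (x i) := by
      simpa using (hasDerivAt_id' (x i)).fun_add ((hG i x).const_mul 2)
    simpa using integral_sub_mul_eq_integral_partialDeriv_pi_gaussianReal
      (μ := fun _ => 0) (v := fun _ => 1) i hF ((hx i).fun_add ((hG_int i).const_mul 2))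
      (hF'_int i) (by simpa using hxF i)
  rw [integral_finsetSum _ fun i _ =>
      ((hxF i).fun_add (hG_sq i)).congr (ae_of_all _ fun x => by ring),
    integral_finsetSum _ fun i _ => (hF'_int i).fun_add (hG_sq i)]
  refine Finset.sum_congr rfl fun i _ => ?_
  calc ∫ x, (x i + G i x) ^ 2 ∂γ = ∫ x, x i * (x i + 2 * G i x) + G i x ^ 2 ∂γ := by
        congr 1 with x; ring
    _ = ∫ x, 1 + 2 * G' i x + G i x ^ 2 ∂γ := by
        rw [integral_add (hxF i) (hG_sq i), integral_add (hF'_int i) (hG_sq i), stein]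

end ProbabilityTheory

lemma integral_lt_integral_of_forall_lt {α : Type*} [MeasurableSpace α] {μ : Measure α}
    [NeZero μ] {f g : α → ℝ} (hf : Integrable f μ) (hg : Integrable g μ) (h : ∀ x, f x < g x) :
    ∫ x, f x ∂μ < ∫ x, g x ∂μ := by
  rw [← sub_pos, ← integral_sub hg hf]
  have hsupp : Function.support (fun x => g x - f x) = Set.univ :=
    Set.eq_univ_of_forall fun x => (sub_pos.2 (h x)).ne'
  rw [integral_pos_iff_support_of_nonneg (fun x => (sub_pos.2 (h x)).le) (hg.sub hf), hsupp]
  exact pos_iff_ne_zero.2 (by simpa using NeZero.ne μ)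

lemma sum_sq_sub_update {ι : Type*} [Fintype ι] [DecidableEq ι] (b x : ι → ℝ) (i : ι) (t : ℝ) :
    ∑ j, (b j - Function.update x i t j) ^ 2
      = (b i - t) ^ 2 + (∑ j, (b j - x j) ^ 2 - (b i - x i) ^ 2) := by
  have hrest : ∑ j ∈ Finset.univ.erase i, (b j - Function.update x i t j) ^ 2
      = ∑ j ∈ Finset.univ.erase i, (b j - x j) ^ 2 :=
    Finset.sum_congr rfl fun j hj => by rw [Function.update_of_ne (Finset.ne_of_mem_erase hj)]
  rw [← Finset.add_sum_erase _ _ (Finset.mem_univ i), hrest,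
    ← Finset.add_sum_erase _ _ (Finset.mem_univ i), Function.update_self]
  ring

lemma hasDerivAt_sub_div_sq_add {c Q t : ℝ} (h : (c - t) ^ 2 + Q ≠ 0) :
    HasDerivAt (fun s => (c - s) / ((c - s) ^ 2 + Q))
      (-1 / ((c - t) ^ 2 + Q) + 2 * (c - t) ^ 2 / ((c - t) ^ 2 + Q) ^ 2) t := by
  have hc : HasDerivAt (fun s => c - s) (-1) t := by simpa using (hasDerivAt_id' t).const_sub c
  refine (hc.fun_div ((hc.fun_pow 2).add_const Q) h).congr_deriv ?_
  field_simp
  ring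

section Shrinkage

variable {ι : Type*} [Fintype ι] (A B : ℝ) (b : ι → ℝ)

def shiftedSqDist (x : ι → ℝ) : ℝ := (∑ j, (b j - x j) ^ 2) + B

noncomputable def shrinkField (i : ι) (x : ι → ℝ) : ℝ := A * (b i - x i) / shiftedSqDist B b x

noncomputable def shrinkFieldDeriv (i : ι) (x : ι → ℝ) : ℝ :=
  A * (-1 / shiftedSqDist B b x + 2 * (b i - x i) ^ 2 / shiftedSqDist B b x ^ 2)

variable {A B} {b}

lemma sq_add_le_shiftedSqDist (x : ι → ℝ) (i : ι) : (b i - x i) ^ 2 + B ≤ shiftedSqDist B b x :=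
  add_le_add_left (Finset.single_le_sum (fun j _ => sq_nonneg (b j - x j)) (Finset.mem_univ i)) B

lemma le_shiftedSqDist (x : ι → ℝ) : B ≤ shiftedSqDist B b x :=
  le_add_of_nonneg_left (Finset.sum_nonneg fun _ _ => sq_nonneg _)

lemma shiftedSqDist_pos (hB : 0 < B) (x : ι → ℝ) : 0 < shiftedSqDist B b x :=
  hB.trans_le (le_shiftedSqDist x)

@[fun_prop]
lemma measurable_shiftedSqDist : Measurable (shiftedSqDist B b) := by
  unfold shiftedSqDist; fun_prop

lemma hasDerivAt_shrinkField_update [DecidableEq ι] (hB : 0 < B) (x : ι → ℝ) (i : ι) :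
    HasDerivAt (fun t => shrinkField A B b i (Function.update x i t))
      (shrinkFieldDeriv A B b i x) (x i) := by
  set Q := shiftedSqDist B b x - (b i - x i) ^ 2
  have hS : (b i - x i) ^ 2 + Q = shiftedSqDist B b x := by ring
  have h := (hasDerivAt_sub_div_sq_add (hS ▸ (shiftedSqDist_pos hB x).ne')).const_mul A
  rw [hS] at h
  refine h.congr_of_eventuallyEq (Filter.Eventually.of_forall fun t => ?_)
  simp only [shrinkField, shiftedSqDist, sum_sq_sub_update, Function.update_self, Q]
  ring

lemma abs_shrinkField_le (hB : 0 < B) (i : ι) (x : ι → ℝ) :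
    |shrinkField A B b i x| ≤ |A| * (1 + 1 / B) := by
  have hle := sq_add_le_shiftedSqDist (B := B) (b := b) x i
  have hS := shiftedSqDist_pos (b := b) hB x
  rw [shrinkField, mul_div_assoc, abs_mul, abs_div, abs_of_pos hS]
  gcongr
  have ha : |b i - x i| ≤ (b i - x i) ^ 2 + 1 := by
    nlinarith [sq_nonneg (|b i - x i| - 1), sq_abs (b i - x i)]
  have h1 : 1 ≤ shiftedSqDist B b x / B := by rw [le_div_iff₀ hB]; linarith [sq_nonneg (b i - x i)]
  rw [div_le_iff₀ hS]
  calc |b i - x i| ≤ shiftedSqDist B b x + shiftedSqDist B b x / B := by linarith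
    _ = (1 + 1 / B) * shiftedSqDist B b x := by ring

lemma abs_shrinkFieldDeriv_le (hB : 0 < B) (i : ι) (x : ι → ℝ) :
    |shrinkFieldDeriv A B b i x| ≤ |A| * (3 / B) := by
  have hle := sq_add_le_shiftedSqDist (B := B) (b := b) x i
  have hS := shiftedSqDist_pos (b := b) hB x
  rw [shrinkFieldDeriv, abs_mul]
  gcongr
  have h1 : 1 / shiftedSqDist B b x ≤ 1 / B := one_div_le_one_div_of_le hB (le_shiftedSqDist x)
  have h2 : (b i - x i) ^ 2 / shiftedSqDist B b x ^ 2 ≤ 1 / B := by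
    rw [div_le_div_iff₀ (by positivity) hB]
    nlinarith [sq_nonneg (b i - x i)]
  have h3 : 0 ≤ (b i - x i) ^ 2 / shiftedSqDist B b x ^ 2 := by positivity
  rw [show -1 / shiftedSqDist B b x + 2 * (b i - x i) ^ 2 / shiftedSqDist B b x ^ 2
      = -(1 / shiftedSqDist B b x) + 2 * ((b i - x i) ^ 2 / shiftedSqDist B b x ^ 2) by ring,
    show 3 / B = 3 * (1 / B) by ring, abs_le]
  constructor <;> linarith [one_div_pos.2 hS]

variable {μ : Measure (ι → ℝ)}

lemma integrable_shrinkField [IsFiniteMeasure μ] (hB : 0 < B) (i : ι) :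
    Integrable (shrinkField A B b i) μ :=
  .of_bound (by unfold shrinkField; fun_prop : Measurable _).aestronglyMeasurable _
    (ae_of_all _ (abs_shrinkField_le hB i))

lemma integrable_shrinkFieldDeriv [IsFiniteMeasure μ] (hB : 0 < B) (i : ι) :
    Integrable (shrinkFieldDeriv A B b i) μ :=
  .of_bound (by unfold shrinkFieldDeriv; fun_prop : Measurable _).aestronglyMeasurable _
    (ae_of_all _ (abs_shrinkFieldDeriv_le hB i))

lemma integrable_mul_shrinkField {f : (ι → ℝ) → ℝ} (hf : Integrable f μ) (hB : 0 < B) (i : ι) :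
    Integrable (fun x => f x * shrinkField A B b i x) μ :=
  hf.mul_bdd (by unfold shrinkField; fun_prop : Measurable _).aestronglyMeasurable
    (ae_of_all _ (abs_shrinkField_le hB i))

lemma integrable_shrinkField_sq [IsFiniteMeasure μ] (hB : 0 < B) (i : ι) :
    Integrable (fun x => shrinkField A B b i x ^ 2) μ := by
  simpa only [sq] using integrable_mul_shrinkField (integrable_shrinkField hB i) hB i

lemma integrable_div_shiftedSqDist [IsFiniteMeasure μ] (hB : 0 < B) (c : ℝ) :
    Integrable (fun x => c / shiftedSqDist B b x) μ := by
  refine .of_bound (by fun_prop : Measurable _).aestronglyMeasurable (|c| / B)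
    (ae_of_all _ fun x => ?_)
  rw [Real.norm_eq_abs, abs_div, abs_of_pos (shiftedSqDist_pos hB x)]
  exact div_le_div_of_nonneg_left (abs_nonneg c) hB (le_shiftedSqDist x)

lemma sum_sure_shrinkField_lt (hA : 0 < A) (hB : 0 < B) (x : ι → ℝ) :
    ∑ i, (1 + 2 * shrinkFieldDeriv A B b i x + shrinkField A B b i x ^ 2)
      < Fintype.card ι + A * (A + 4 - 2 * Fintype.card ι) / shiftedSqDist B b x := by
  set S := shiftedSqDist B b x with hS_def
  have hS : 0 < S := shiftedSqDist_pos hB x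
  have hterm i : 1 + 2 * shrinkFieldDeriv A B b i x + shrinkField A B b i x ^ 2
      = (1 - 2 * A / S) + (4 * A + A ^ 2) / S ^ 2 * (b i - x i) ^ 2 := by
    simp only [shrinkField, shrinkFieldDeriv, ← hS_def]
    field_simp
    ring
  rw [Finset.sum_congr rfl fun i _ => hterm i, Finset.sum_add_distrib, ← Finset.mul_sum,
    Finset.sum_const, Finset.card_univ, nsmul_eq_mul]
  have hT : ∑ i, (b i - x i) ^ 2 = S - B := by simp only [S, shiftedSqDist]; ring
  rw [← sub_pos, hT]
  have key : (Fintype.card ι : ℝ) + A * (A + 4 - 2 * Fintype.card ι) / S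
      - (Fintype.card ι * (1 - 2 * A / S) + (4 * A + A ^ 2) / S ^ 2 * (S - B))
      = (4 * A + A ^ 2) * B / S ^ 2 := by
    field_simp
    ring
  rw [key]
  positivity

end Shrinkage

theorem stmt14_general {d : ℕ} (b : Fin d → ℝ) (A B : ℝ)
    (hA : 0 < A) (hB : 0 < B) :
    (∫ x : Fin d → ℝ,
        ∑ i, (x i + A * (b i - x i) / ((∑ j, (b j - x j)^2) + B))^2
      ∂(Measure.pi fun _ : Fin d => gaussianReal 0 1))
    < d + ∫ x : Fin d → ℝ,
        A * (A + 4 - 2 * d) / ((∑ j, (b j - x j)^2) + B)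
      ∂(Measure.pi fun _ : Fin d => gaussianReal 0 1) := by
  have hsure := integral_sum_sq_add_eq_integral_sure (G := shrinkField A B b)
    (G' := shrinkFieldDeriv A B b) (fun i x => hasDerivAt_shrinkField_update hB x i)
    (fun i => integrable_shrinkField hB i) (fun i => integrable_shrinkFieldDeriv hB i)
    (fun i => integrable_mul_shrinkField (integrable_eval_pi_gaussianReal _ _ i) hB i)
    (fun i => integrable_shrinkField_sq hB i)
  have hsum_int := integrable_finsetSum (μ := Measure.pi fun _ : Fin d => gaussianReal 0 1)
    Finset.univ fun i _ => ((integrable_const 1).fun_add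
      ((integrable_shrinkFieldDeriv (b := b) (A := A) hB i).const_mul 2)).fun_add
      (integrable_shrinkField_sq (b := b) (A := A) hB i)
  have hdiv_int := integrable_div_shiftedSqDist
    (μ := Measure.pi fun _ : Fin d => gaussianReal 0 1) (b := b) hB (A * (A + 4 - 2 * d))
  have hrhs_int := (integrable_const (d : ℝ)).fun_add hdiv_int
  calc _ = _ := hsure
    _ < _ := integral_lt_integral_of_forall_lt hsum_int hrhs_int fun x => by
        simpa using sum_sure_shrinkField_lt hA hB x
    _ = _ := by
        rw [integral_add (integrable_const _) hdiv_int, integral_const, probReal_univ, one_smul]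
        rfl

/-- For `η ~ N(0, I_d)`, `b ∈ ℝᵈ`, `A, B > 0` and
`Z = η + A(b−η)/(‖b−η‖² + B)`, we have
`E‖Z‖² < d + E[A(A + 4 − 2d)/(‖b−η‖² + B)]`. -/
theorem stmt14 {d : ℕ} (hd : 1 ≤ d) (b : Fin d → ℝ) (A B : ℝ)
    (hA : 0 < A) (hB : 0 < B) :
    (∫ x : Fin d → ℝ,
        ∑ i, (x i + A * (b i - x i) / ((∑ j, (b j - x j)^2) + B))^2
      ∂(Measure.pi fun _ : Fin d => gaussianReal 0 1))
    < d + ∫ x : Fin d → ℝ,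
        A * (A + 4 - 2 * d) / ((∑ j, (b j - x j)^2) + B)
      ∂(Measure.pi fun _ : Fin d => gaussianReal 0 1) :=
  stmt14_general b A B hA hB
end

section
/- Let Q ~ χ²_{(m)} with integer m ≥ 1, and let C > 1, D > 0. Then E[ Q(C − Q/m)/(Q + D) ] ≥ ((C−1)m − 2)/(m + 2 + D). In particular this expectation is positive whenever C > 1 + 2/m. -/
/-!
Since `x · p_a(x) = (a / r) · p_{a+1}(x)` for the Gamma(a, r) density, size-biasing `Q ~ χ²_(m)`
turns `E[Q (C − Q/m)/(Q + D)]` into `E[(mC − Q')/(Q' + D)]` with `Q' ~ χ²_(m+2)`, whose mean is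
`m + 2`. As `(mC − x)/(x + D) = (mC + D)/(x + D) − 1` is convex on `x ≥ 0`, Jensen's inequality
bounds this expectation below by `(mC − (m + 2))/(m + 2 + D)`.
-/

open MeasureTheory ProbabilityTheory Set

section Jensen

variable {α : Type*} [MeasurableSpace α] {μ : Measure α} {f : α → ℝ}

lemma integrable_inv_add_of_nonneg [IsFiniteMeasure μ] (hf₀ : ∀ᵐ ω ∂μ, 0 ≤ f ω)
    (hf : AEMeasurable f μ) {D : ℝ} (hD : 0 < D) : Integrable (fun ω ↦ (f ω + D)⁻¹) μ := by
  refine .of_bound (hf.add_const D).inv.aestronglyMeasurable D⁻¹ ?_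
  filter_upwards [hf₀] with ω h
  rw [Real.norm_eq_abs, abs_inv, abs_of_pos (by linarith)]
  exact inv_anti₀ hD (by linarith)

variable [IsProbabilityMeasure μ]

lemma inv_integral_add_le_integral_inv_add (hf₀ : ∀ᵐ ω ∂μ, 0 ≤ f ω) (hf : Integrable f μ)
    {D : ℝ} (hD : 0 < D) : (∫ ω, f ω ∂μ + D)⁻¹ ≤ ∫ ω, (f ω + D)⁻¹ ∂μ := by
  have hconv : ConvexOn ℝ (Ici D) fun x : ℝ ↦ x⁻¹ := by
    simpa only [zpow_neg_one] using
      (convexOn_zpow (𝕜 := ℝ) (-1)).subset (Ici_subset_Ioi.mpr hD) (convex_Ici D)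
  have hcont : ContinuousOn (fun x : ℝ ↦ x⁻¹) (Ici D) :=
    continuousOn_inv₀.mono fun x hx ↦ (hD.trans_le hx).ne'
  have hmem : ∀ᵐ ω ∂μ, f ω + D ∈ Ici D := hf₀.mono fun ω h ↦ by simpa using h
  have hinv := integrable_inv_add_of_nonneg hf₀ hf.aemeasurable hD
  simpa [integral_add hf (integrable_const D)] using
    hconv.map_integral_le hcont isClosed_Ici hmem (hf.add (integrable_const D)) hinv

lemma div_integral_add_le_integral_div_add (hf₀ : ∀ᵐ ω ∂μ, 0 ≤ f ω) (hf : Integrable f μ)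
    {K D : ℝ} (hK : -D ≤ K) (hD : 0 < D) :
    (K - ∫ ω, f ω ∂μ) / (∫ ω, f ω ∂μ + D) ≤ ∫ ω, (K - f ω) / (f ω + D) ∂μ := by
  have hsplit : ∀ x, 0 < x + D → (K - x) / (x + D) = (K + D) * (x + D)⁻¹ - 1 := fun x hx ↦ by
    field_simp
    ring
  have hmean : 0 < ∫ ω, f ω ∂μ + D := by linarith [integral_nonneg_of_ae hf₀]
  have hinv := integrable_inv_add_of_nonneg hf₀ hf.aemeasurable hD
  calc (K - ∫ ω, f ω ∂μ) / (∫ ω, f ω ∂μ + D)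
      = (K + D) * (∫ ω, f ω ∂μ + D)⁻¹ - 1 := hsplit _ hmean
    _ ≤ (K + D) * ∫ ω, (f ω + D)⁻¹ ∂μ - 1 := by
      gcongr
      · linarith
      · exact inv_integral_add_le_integral_inv_add hf₀ hf hD
    _ = ∫ ω, ((K + D) * (f ω + D)⁻¹ - 1) ∂μ := by
      rw [integral_sub (hinv.const_mul _) (integrable_const 1), integral_const_mul]
      simp
    _ = ∫ ω, (K - f ω) / (f ω + D) ∂μ := by
      refine integral_congr_ae ?_
      filter_upwards [hf₀] with ω h
      exact (hsplit _ (by linarith)).symm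

end Jensen

section Gamma

variable {a r : ℝ}

lemma gammaPDFReal_of_neg {x : ℝ} (hx : x < 0) : gammaPDFReal a r x = 0 :=
  if_neg (not_le.mpr hx)

lemma mul_gammaPDFReal (ha : 0 < a) (hr : 0 < r) (x : ℝ) :
    x * gammaPDFReal a r x = a / r * gammaPDFReal (a + 1) r x := by
  rcases lt_trichotomy x 0 with hx | rfl | hx
  · simp [gammaPDFReal_of_neg hx]
  · simp [gammaPDFReal, Real.zero_rpow ha.ne']
  · simp only [gammaPDFReal, if_pos hx.le, add_sub_cancel_right, Real.Gamma_add_one ha.ne',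
      Real.rpow_add_one hr.ne', Real.rpow_sub_one hx.ne']
    have := (Real.Gamma_pos_of_pos ha).ne'
    field_simp

lemma measurable_gammaPDF : Measurable (gammaPDF a r) :=
  (measurable_gammaPDFReal a r).ennreal_ofReal

lemma ae_nonneg_gammaMeasure : ∀ᵐ x ∂gammaMeasure a r, 0 ≤ x :=
  (ae_withDensity_iff measurable_gammaPDF).mpr <|
    ae_of_all _ fun _ h ↦ not_lt.mp fun hx ↦ h (gammaPDF_of_neg hx)

lemma integral_gammaMeasure (ha : 0 < a) (hr : 0 < r) (g : ℝ → ℝ) :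
    ∫ x, g x ∂gammaMeasure a r = ∫ x, gammaPDFReal a r x * g x := by
  rw [gammaMeasure, integral_withDensity_eq_integral_toReal_smul measurable_gammaPDF
    (ae_of_all _ fun _ ↦ ENNReal.ofReal_lt_top)]
  simp [gammaPDF, ENNReal.toReal_ofReal (gammaPDFReal_nonneg ha hr _)]

lemma integrable_gammaMeasure_iff (ha : 0 < a) (hr : 0 < r) {g : ℝ → ℝ} :
    Integrable g (gammaMeasure a r) ↔ Integrable (fun x ↦ gammaPDFReal a r x * g x) := by
  rw [gammaMeasure, integrable_withDensity_iff measurable_gammaPDF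
    (ae_of_all _ fun _ ↦ ENNReal.ofReal_lt_top)]
  simp [gammaPDF, ENNReal.toReal_ofReal (gammaPDFReal_nonneg ha hr _), mul_comm]

lemma gammaPDFReal_mul_mul (ha : 0 < a) (hr : 0 < r) (g : ℝ → ℝ) (x : ℝ) :
    gammaPDFReal a r x * (x * g x) = a / r * (gammaPDFReal (a + 1) r x * g x) := by
  rw [← mul_assoc, mul_comm _ x, mul_gammaPDFReal ha hr, mul_assoc]

lemma integral_mul_gammaMeasure (ha : 0 < a) (hr : 0 < r) (g : ℝ → ℝ) :
    ∫ x, x * g x ∂gammaMeasure a r = a / r * ∫ x, g x ∂gammaMeasure (a + 1) r := by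
  simp only [integral_gammaMeasure ha hr, integral_gammaMeasure (by linarith : 0 < a + 1) hr,
    gammaPDFReal_mul_mul ha hr, integral_const_mul]

lemma integrable_mul_gammaMeasure_iff (ha : 0 < a) (hr : 0 < r) {g : ℝ → ℝ} :
    Integrable (fun x ↦ x * g x) (gammaMeasure a r) ↔ Integrable g (gammaMeasure (a + 1) r) := by
  simp only [integrable_gammaMeasure_iff ha hr,
    integrable_gammaMeasure_iff (by linarith : 0 < a + 1) hr, gammaPDFReal_mul_mul ha hr]
  exact integrable_const_mul_iff (div_pos ha hr).ne'.isUnit _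

lemma integrable_id_gammaMeasure (ha : 0 < a) (hr : 0 < r) :
    Integrable (fun x ↦ x) (gammaMeasure a r) := by
  have := isProbabilityMeasure_gammaMeasure (by linarith : 0 < a + 1) hr
  simpa using (integrable_mul_gammaMeasure_iff ha hr (g := 1)).mpr (integrable_const 1)

lemma integral_id_gammaMeasure (ha : 0 < a) (hr : 0 < r) :
    ∫ x, x ∂gammaMeasure a r = a / r := by
  have := isProbabilityMeasure_gammaMeasure (by linarith : 0 < a + 1) hr
  simpa using integral_mul_gammaMeasure ha hr 1

end Gamma

/-- For `Q ~ χ²_(m)` (a Gamma(m/2, 1/2) distribution), `C > 1`, `D > 0`: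
`E[Q(C − Q/m)/(Q + D)] ≥ ((C−1)m − 2)/(m + 2 + D)`; in particular the
expectation is positive whenever `C > 1 + 2/m`. -/
theorem stmt15 (m : ℕ) (hm : 1 ≤ m) (C D : ℝ) (hC : 1 < C) (hD : 0 < D) :
    (((C - 1) * m - 2) / (m + 2 + D)
      ≤ ∫ x, x * (C - x / m) / (x + D) ∂(gammaMeasure (m / 2 : ℝ) (1 / 2)))
    ∧ (1 + 2 / (m : ℝ) < C →
        0 < ∫ x, x * (C - x / m) / (x + D) ∂(gammaMeasure (m / 2 : ℝ) (1 / 2))) := by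
  have hm₀ : (0 : ℝ) < m := by exact_mod_cast hm
  have ha : (0 : ℝ) < m / 2 := by positivity
  have ha₁ : (0 : ℝ) < m / 2 + 1 := by positivity
  have hr : (0 : ℝ) < 1 / 2 := by norm_num
  have := isProbabilityMeasure_gammaMeasure ha₁ hr
  have hsize : ∫ x, x * (C - x / m) / (x + D) ∂gammaMeasure (m / 2 : ℝ) (1 / 2)
      = ∫ x, (m * C - x) / (x + D) ∂gammaMeasure (m / 2 + 1 : ℝ) (1 / 2) := by
    simp_rw [mul_div_assoc]
    rw [integral_mul_gammaMeasure ha hr, ← integral_const_mul]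
    congr 1 with x
    field_simp
  have hmean : ∫ x, x ∂gammaMeasure (m / 2 + 1 : ℝ) (1 / 2) = m + 2 := by
    rw [integral_id_gammaMeasure ha₁ hr]
    ring
  have hbound : ((C - 1) * m - 2) / (m + 2 + D)
      ≤ ∫ x, x * (C - x / m) / (x + D) ∂gammaMeasure (m / 2 : ℝ) (1 / 2) := by
    rw [hsize, show (C - 1) * m - 2 = m * C - (m + 2) by ring, ← hmean]
    exact div_integral_add_le_integral_div_add ae_nonneg_gammaMeasure
      (integrable_id_gammaMeasure ha₁ hr) (by nlinarith) hD
  refine ⟨hbound, fun hC₂ ↦ hbound.trans_lt' (div_pos ?_ (by positivity))⟩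
  have : 2 < (C - 1) * m := (div_lt_iff₀ hm₀).mp (by linarith)
  linarith
end
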